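/- arXiv:2301.11910 — 9 statements merged into one kernel-verified Lean document; each statement's English description precedes it below -/
import Mathlib

section
/- Let D be ℝ, ℂ, or the real quaternions ℍ, and let n ≥ 1. The nilpotent Jordan block X = J(0,n) in gl(n,D) is strongly Ad_{GL(n,D)}-real; that is, there exists an invertible n×n matrix g over D with g² = I and g·X·g⁻¹ = -X. -/
open Matrix

set_option maxHeartbeats 1000000

/-- The Jordan block `J(λ, m)`: an `m × m` matrix with `λ` on the diagonal,
`1` on the superdiagonal, and `0` elsewhere. -/
def jordanBlock {D : Type*} [Ring D] (lam : D) (m : ℕ) : Matrix (Fin m) (Fin m) D :=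
  Matrix.of fun i j => if i = j then lam else if (i : ℕ) + 1 = (j : ℕ) then 1 else 0

/-- The realification embedding `Ψ : M(n,ℂ) → M(2n,ℝ)`, replacing each complex entry
`z` by the 2×2 real block `((Re z, Im z), (-Im z, Re z))`. -/
def Psi {n : ℕ} (A : Matrix (Fin n) (Fin n) ℂ) :
    Matrix (Fin n × Fin 2) (Fin n × Fin 2) ℝ :=
  Matrix.of fun p q =>
    !![(A p.1 q.1).re, (A p.1 q.1).im; -(A p.1 q.1).im, (A p.1 q.1).re] p.2 q.2

/-- The standard embedding of `ℂ` into the real quaternions,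
sending `a + b i` to `a + b 𝐢`. -/
def toQuat (z : ℂ) : Quaternion ℝ := ⟨z.re, z.im, 0, 0⟩

/-- `X ∈ gl(n,D)` is `Ad_{GL(n,D)}`-real: there is an invertible matrix `g`
with `g X g⁻¹ = -X`. -/
def AdjReal {D : Type*} [Ring D] {ι : Type*} [Fintype ι] [DecidableEq ι]
    (X : Matrix ι ι D) : Prop :=
  ∃ g : (Matrix ι ι D)ˣ, g.val * X * (g⁻¹).val = -X

/-- `X ∈ gl(n,D)` is strongly `Ad_{GL(n,D)}`-real: there is an invertible matrix `g`
with `g² = I` and `g X g⁻¹ = -X`. -/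
def StronglyAdjReal {D : Type*} [Ring D] {ι : Type*} [Fintype ι] [DecidableEq ι]
    (X : Matrix ι ι D) : Prop :=
  ∃ g : (Matrix ι ι D)ˣ, g * g = 1 ∧ g.val * X * (g⁻¹).val = -X

/-- `A` is reversible in `GL(n,D)`: `A` is invertible and there is an invertible
matrix `g` with `g A g⁻¹ = A⁻¹`. -/
def Reversible {D : Type*} [Ring D] {ι : Type*} [Fintype ι] [DecidableEq ι]
    (A : Matrix ι ι D) : Prop :=
  ∃ a : (Matrix ι ι D)ˣ, a.val = A ∧ ∃ g : (Matrix ι ι D)ˣ, g * a * g⁻¹ = a⁻¹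

/-- `A` is strongly reversible in `GL(n,D)`: `A` is invertible and there is an
invertible matrix `g` with `g² = I` and `g A g⁻¹ = A⁻¹`. -/
def StronglyReversible {D : Type*} [Ring D] {ι : Type*} [Fintype ι] [DecidableEq ι]
    (A : Matrix ι ι D) : Prop :=
  ∃ a : (Matrix ι ι D)ˣ, a.val = A ∧ ∃ g : (Matrix ι ι D)ˣ, g * g = 1 ∧ g * a * g⁻¹ = a⁻¹

lemma stronglyAdjReal_jordanBlock_zero (D : Type*) [Ring D] (n : ℕ) :
    StronglyAdjReal (jordanBlock (0 : D) n) := by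
  set d : Fin n → D := fun i => (-1 : D) ^ (i : ℕ) with hd
  have hg : Matrix.diagonal d * Matrix.diagonal d = 1 := by
    rw [Matrix.diagonal_mul_diagonal]
    have : (fun i => d i * d i) = fun _ => (1 : D) := by
      funext i
      simp only [hd, ← pow_add]
      exact Even.neg_one_pow ⟨(i : ℕ), rfl⟩
    rw [this, Matrix.diagonal_one]
  refine ⟨⟨Matrix.diagonal d, Matrix.diagonal d, hg, hg⟩, ?_, ?_⟩
  · exact Units.ext hg
  · show Matrix.diagonal d * jordanBlock (0 : D) n * Matrix.diagonal d = _
    ext i j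
    simp only [Matrix.mul_diagonal, Matrix.diagonal_mul, jordanBlock, Matrix.neg_apply,
      Matrix.of_apply]
    split_ifs with h1 h2
    · simp
    · have : d i * 1 * d j = (-1 : D) ^ ((i : ℕ) + (j : ℕ)) := by
        simp [hd, pow_add]
      rw [this, ← h2]
      have : Odd ((i : ℕ) + ((i : ℕ) + 1)) := ⟨(i : ℕ), by ring⟩
      rw [this.neg_one_pow]
    · simp

/-- For `D = ℝ, ℂ, ℍ` and `n ≥ 1`, the nilpotent Jordan block
`J(0,n) ∈ gl(n,D)` is strongly `Ad_{GL(n,D)}`-real. -/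
theorem stmt0 (n : ℕ) (hn : 1 ≤ n) :
    StronglyAdjReal (jordanBlock (0 : ℝ) n) ∧
    StronglyAdjReal (jordanBlock (0 : ℂ) n) ∧
    StronglyAdjReal (jordanBlock (0 : Quaternion ℝ) n) := by
  exact ⟨stronglyAdjReal_jordanBlock_zero ℝ n, stronglyAdjReal_jordanBlock_zero ℂ n, stronglyAdjReal_jordanBlock_zero (Quaternion ℝ) n⟩
end

section
/- Let n ≥ 1 and let X = J(λ,n) ⊕ J(-λ,n) be the block-diagonal matrix in gl(2n,D), where either D = ℝ or D = ℂ and λ ∈ D \ {0}, or D = ℍ and λ is a nonzero complex number with nonnegative imaginary part and nonzero real part, viewed as a quaternion. Then X is strongly Ad_{GL(2n,D)}-real; that is, there exists an invertible 2n×2n matrix g over D with g² = I and g·X·g⁻¹ = -X. -/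
open Matrix

set_option maxHeartbeats 1000000

section Aux

variable {D : Type*} [Ring D]

/-- The diagonal sign matrix `diag(1, -1, 1, ...)`. -/
def sgnMat (n : ℕ) : Matrix (Fin n) (Fin n) D :=
  Matrix.diagonal fun i => (-1 : D) ^ (i : ℕ)

lemma sgnMat_mul_sgnMat (n : ℕ) : (sgnMat n : Matrix (Fin n) (Fin n) D) * sgnMat n = 1 := by
  rw [sgnMat, Matrix.diagonal_mul_diagonal]
  have : (fun i : Fin n => (-1 : D) ^ (i : ℕ) * (-1) ^ (i : ℕ)) = fun _ => 1 := by
    funext i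
    rw [← pow_add, ← two_mul, pow_mul, neg_one_sq, one_pow]
  rw [this, Matrix.diagonal_one]

lemma sgnMat_jordan (lam : D) (n : ℕ) :
    (sgnMat n) * jordanBlock lam n * (sgnMat n) = -(jordanBlock (-lam) n) := by
  ext i j
  simp only [sgnMat, Matrix.diagonal_mul, Matrix.mul_diagonal, jordanBlock, Matrix.of_apply,
    Matrix.neg_apply]
  by_cases h : i = j
  · subst h
    simp only [if_pos rfl]
    rcases Nat.even_or_odd (i : ℕ) with he | ho
    · simp [he.neg_one_pow]
    · simp [ho.neg_one_pow]
  · simp only [if_neg h]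
    by_cases h2 : (i : ℕ) + 1 = (j : ℕ)
    · simp only [if_pos h2, mul_one]
      rw [← h2, pow_succ]
      rcases Nat.even_or_odd (i : ℕ) with he | ho
      · simp [he.neg_one_pow]
      · simp [ho.neg_one_pow]
    · simp [h2]

lemma strong_block (lam : D) (n : ℕ) :
    StronglyAdjReal (fromBlocks (jordanBlock lam n) 0 0 (jordanBlock (-lam) n)) := by
  set d : Matrix (Fin n) (Fin n) D := sgnMat n with hdDef
  have hd : d * d = 1 := sgnMat_mul_sgnMat n
  set A := jordanBlock lam n with hA
  set B := jordanBlock (-lam) n with hB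
  have h1 : d * A * d = -B := sgnMat_jordan lam n
  have h2 : d * B * d = -A := by
    have := sgnMat_jordan (-lam) n
    rwa [neg_neg, ← hA, ← hB, ← hdDef] at this
  set G : Matrix (Fin n ⊕ Fin n) (Fin n ⊕ Fin n) D := fromBlocks 0 d d 0 with hGdef
  have hGG : G * G = 1 := by
    rw [hGdef, Matrix.fromBlocks_multiply]
    simp [hd, ← Matrix.fromBlocks_one]
  refine ⟨⟨G, G, hGG, hGG⟩, Units.ext (by simpa using hGG), ?_⟩
  show G * fromBlocks A 0 0 B * G = -(fromBlocks A 0 0 B)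
  rw [hGdef, Matrix.fromBlocks_multiply, Matrix.fromBlocks_multiply]
  simp only [Matrix.zero_mul, Matrix.mul_zero, zero_add, add_zero,
    Matrix.mul_assoc] at *
  simp [h1, h2, Matrix.fromBlocks_neg]

end Aux

/-- For `n ≥ 1`, the block-diagonal matrix `X = J(λ,n) ⊕ J(-λ,n)` is strongly
`Ad_{GL(2n,D)}`-real, where `D = ℝ` or `ℂ` and `λ ∈ D \ {0}`, or `D = ℍ` and `λ` is a nonzero
complex number with nonnegative imaginary part and nonzero real part, viewed as a quaternion. -/
theorem stmt1 (n : ℕ) (hn : 1 ≤ n) :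
    (∀ lam : ℝ, lam ≠ 0 →
      StronglyAdjReal (fromBlocks (jordanBlock lam n) 0 0 (jordanBlock (-lam) n))) ∧
    (∀ lam : ℂ, lam ≠ 0 →
      StronglyAdjReal (fromBlocks (jordanBlock lam n) 0 0 (jordanBlock (-lam) n))) ∧
    (∀ lam : ℂ, lam ≠ 0 → 0 ≤ lam.im → lam.re ≠ 0 →
      StronglyAdjReal
        (fromBlocks (jordanBlock (toQuat lam) n) 0 0 (jordanBlock (-(toQuat lam)) n))) := by
  exact ⟨fun lam _ => strong_block lam n, fun lam _ => strong_block lam n,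
    fun lam _ _ _ => strong_block (toQuat lam) n⟩
end

section
/- Let μ be a positive real number and n ≥ 1. Let X = J(μ𝐢,n) ⊕ J(μ𝐢,n) be the block-diagonal matrix in gl(2n,ℍ), where 𝐢 denotes the quaternion imaginary unit. Then X is strongly Ad_{GL(2n,ℍ)}-real; that is, there exists an invertible 2n×2n quaternionic matrix g with g² = I and g·X·g⁻¹ = -X. -/
/-!
If `A² = -1` and `A X A = X`, then `g = [[0, A], [-A, 0]]` is an involution with
`g (X ⊕ X) g⁻¹ = -(X ⊕ X)`. For `X = J(μ𝐢, n)` take `A = diag(𝐣, -𝐣, 𝐣, …)`: since `𝐣` anticommutes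
with `𝐢`, `𝐣 (μ𝐢) 𝐣 = μ𝐢` on the diagonal, and the alternating signs give `𝐣 · 1 · (-𝐣) = 1` on the
superdiagonal.
-/

open Matrix

set_option maxHeartbeats 1000000

open Quaternion

theorem stronglyAdjReal_fromBlocks_self {D : Type*} [Ring D] {ι : Type*} [Fintype ι]
    [DecidableEq ι] {X A : Matrix ι ι D} (hA : A * A = -1) (hAXA : A * X * A = X) :
    StronglyAdjReal (fromBlocks X 0 0 X) := by
  have hg : fromBlocks 0 A (-A) 0 * fromBlocks 0 A (-A) 0 = (1 : Matrix (ι ⊕ ι) (ι ⊕ ι) D) := by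
    simp [fromBlocks_multiply, hA]
  refine ⟨⟨_, _, hg, hg⟩, Units.ext hg, ?_⟩
  simp [fromBlocks_multiply, hAXA, fromBlocks_neg]

section SignedDiagonal

variable {D : Type*} [Ring D]

theorem neg_one_pow_mul_mul_mul_neg_one_pow_mul (a b : ℕ) (j x : D) :
    (-1) ^ a * j * x * ((-1) ^ b * j) = (-1) ^ (a + b) * (j * x * j) := by
  rw [mul_assoc _ j x, ((Commute.neg_one_left (j * x)).pow_left b).symm.mul_mul_mul_comm,
    ← pow_add]

def signedDiagonal (j : D) (n : ℕ) : Matrix (Fin n) (Fin n) D :=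
  diagonal fun i => (-1) ^ (i : ℕ) * j

theorem signedDiagonal_mul_jordanBlock_mul_signedDiagonal {j lam : D} (hj : j * j = -1)
    (hjlam : j * lam * j = lam) (n : ℕ) :
    signedDiagonal j n * jordanBlock lam n * signedDiagonal j n = jordanBlock lam n := by
  ext i k
  simp only [signedDiagonal, mul_diagonal, diagonal_mul, neg_one_pow_mul_mul_mul_neg_one_pow_mul,
    jordanBlock, of_apply]
  split_ifs with hik hsucc
  · rw [hik, hjlam, Even.neg_one_pow ⟨k, rfl⟩, one_mul]
  · rw [mul_one, hj, ← hsucc, Odd.neg_one_pow ⟨i, by ring⟩, neg_one_mul, neg_neg]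
  · rw [mul_zero, zero_mul, mul_zero]

theorem signedDiagonal_mul_self {j : D} (hj : j * j = -1) (n : ℕ) :
    signedDiagonal j n * signedDiagonal j n = -1 := by
  rw [signedDiagonal, diagonal_mul_diagonal, ← diagonal_one, diagonal_neg]
  congr 1
  ext i
  simpa [hj] using neg_one_pow_mul_mul_mul_neg_one_pow_mul i i j 1

end SignedDiagonal

section QuaternionJ

def quaternionJ (R : Type*) [CommRing R] : ℍ[R] := ⟨0, 0, 1, 0⟩

variable {R : Type*} [CommRing R]

theorem quaternionJ_mul_self : quaternionJ R * quaternionJ R = -1 := by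
  ext <;> simp only [re_mul, imI_mul, imJ_mul, imK_mul] <;> simp [quaternionJ]

theorem quaternionJ_mul_mul_quaternionJ {x : ℍ[R]} (hre : x.re = 0) (himJ : x.imJ = 0) :
    quaternionJ R * x * quaternionJ R = x := by
  ext <;> simp only [re_mul, imI_mul, imJ_mul, imK_mul] <;> simp [quaternionJ, hre, himJ]

end QuaternionJ

theorem stmt2_general (μ : ℝ) (n : ℕ) :
    StronglyAdjReal
      (fromBlocks (jordanBlock ((⟨0, μ, 0, 0⟩ : Quaternion ℝ)) n) 0 0
        (jordanBlock ((⟨0, μ, 0, 0⟩ : Quaternion ℝ)) n)) :=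
  stronglyAdjReal_fromBlocks_self (signedDiagonal_mul_self quaternionJ_mul_self n)
    (signedDiagonal_mul_jordanBlock_mul_signedDiagonal quaternionJ_mul_self
      (quaternionJ_mul_mul_quaternionJ rfl rfl) n)

/-- For real `μ > 0` and `n ≥ 1`, the block-diagonal quaternionic matrix
`X = J(μ𝐢,n) ⊕ J(μ𝐢,n)` is strongly `Ad_{GL(2n,ℍ)}`-real. -/
theorem stmt2 (μ : ℝ) (hμ : 0 < μ) (n : ℕ) (hn : 1 ≤ n) :
    StronglyAdjReal
      (fromBlocks (jordanBlock ((⟨0, μ, 0, 0⟩ : Quaternion ℝ)) n) 0 0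
        (jordanBlock ((⟨0, μ, 0, 0⟩ : Quaternion ℝ)) n)) :=
  stmt2_general μ n
end

section
/- Let ν > 0 be a real number and n ≥ 1. Let X = Ψ(J(iν,n)) ∈ gl(2n,ℝ) be the real Jordan block J_ℝ(0 ± iν, 2n). Then X is strongly Ad_{GL(2n,ℝ)}-real; that is, there exists an invertible 2n×2n real matrix g with g² = I and g·X·g⁻¹ = -X. -/
open Matrix

set_option maxHeartbeats 1000000

/-- For real `ν > 0` and `n ≥ 1`, the real Jordan block
`X = J_ℝ(0 ± iν, 2n) = Ψ(J(iν,n)) ∈ gl(2n,ℝ)` is strongly `Ad_{GL(2n,ℝ)}`-real. -/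
theorem stmt3 (ν : ℝ) (hν : 0 < ν) (n : ℕ) (hn : 1 ≤ n) :
    StronglyAdjReal (Psi (jordanBlock ((⟨0, ν⟩ : ℂ)) n)) := by
  set ε : Fin n × Fin 2 → ℝ :=
    fun p => (if p.2 = 0 then 1 else -1) * (-1 : ℝ) ^ (p.1 : ℕ) with hε
  have hεsq : ∀ p, ε p * ε p = 1 := by
    intro p
    simp only [hε]
    rw [mul_mul_mul_comm, ← mul_pow]
    split_ifs <;> norm_num
  have hgg : Matrix.diagonal ε * Matrix.diagonal ε = 1 := by
    rw [Matrix.diagonal_mul_diagonal]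
    convert Matrix.diagonal_one using 2
    exact funext hεsq
  refine ⟨⟨Matrix.diagonal ε, Matrix.diagonal ε, hgg, hgg⟩, ?_, ?_⟩
  · exact Units.ext hgg
  · show Matrix.diagonal ε * _ * Matrix.diagonal ε = _
    ext p q
    rw [Matrix.mul_diagonal, Matrix.diagonal_mul]
    rcases p with ⟨i, s⟩
    rcases q with ⟨j, t⟩
    show ε (i, s) * Psi _ (i, s) (j, t) * ε (j, t) = -Psi _ (i, s) (j, t)
    have hpow : (-1 : ℝ) ^ (i : ℕ) * (-1 : ℝ) ^ ((i : ℕ) + 1) = -1 := by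
      rw [← pow_add]
      have : Odd ((i : ℕ) + ((i : ℕ) + 1)) := ⟨i, by ring⟩
      exact Odd.neg_one_pow this
    fin_cases s <;> fin_cases t <;>
      by_cases hij : i = j <;> by_cases hij2 : (i : ℕ) + 1 = (j : ℕ) <;>
      simp_all [Psi, jordanBlock, hε, Complex.ext_iff, hpow] <;>
      ring_nf <;> (try simp [pow_mul, sq]) <;> nlinarith [hpow, hεsq i, hεsq j]
end

section
/- Let μ, ν be real numbers with μ ≠ 0 and ν > 0, and let n ≥ 1. Let X = Ψ(J(μ+iν,n)) ⊕ Ψ(J(-(μ+iν),n)) ∈ gl(4n,ℝ), i.e., X is the direct sum of the real Jordan blocks J_ℝ(μ ± iν, 2n) and J_ℝ(-μ ∓ iν, 2n). Then X is strongly Ad_{GL(4n,ℝ)}-real; that is, there exists an invertible 4n×4n real matrix g with g² = I and g·X·g⁻¹ = -X. -/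
open Matrix

set_option maxHeartbeats 1000000

/-- The alternating-sign diagonal function on `Fin n × Fin 2`. -/
noncomputable def altSign (n : ℕ) : Fin n × Fin 2 → ℝ := fun p => (-1 : ℝ) ^ (p.1 : ℕ)

lemma altSign_mul_self {n : ℕ} (p : Fin n × Fin 2) : altSign n p * altSign n p = 1 := by
  simp only [altSign]
  rw [← pow_add, ← two_mul, pow_mul]
  norm_num

lemma diag_conj_psi {n : ℕ} (w : ℂ) :
    Matrix.diagonal (altSign n) * Psi (jordanBlock w n) * Matrix.diagonal (altSign n)
      = - Psi (jordanBlock (-w) n) := by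
  ext p q
  rw [Matrix.mul_diagonal, Matrix.diagonal_mul]
  obtain ⟨i, a⟩ := p
  obtain ⟨j, b⟩ := q
  simp only [Psi, jordanBlock, Matrix.of_apply, Matrix.neg_apply, altSign]
  by_cases hij : i = j
  · subst hij
    have h1 : (-1 : ℝ) ^ (i : ℕ) * (-1 : ℝ) ^ (i : ℕ) = 1 := by
      rw [← pow_add, ← two_mul, pow_mul]; norm_num
    fin_cases a <;> fin_cases b <;>
      simp [Matrix.cons_val_zero, Matrix.cons_val_one] <;> ring_nf <;>
      simp [sq, h1]
  · by_cases hsucc : (i : ℕ) + 1 = (j : ℕ)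
    · have h2 : (-1 : ℝ) ^ (j : ℕ) = -((-1 : ℝ) ^ (i : ℕ)) := by
        rw [← hsucc, pow_succ]; ring
      have h1 : (-1 : ℝ) ^ (i : ℕ) * (-1 : ℝ) ^ (i : ℕ) = 1 := by
        rw [← pow_add, ← two_mul, pow_mul]; norm_num
      fin_cases a <;> fin_cases b <;>
        simp [hij, hsucc, Matrix.cons_val_zero, Matrix.cons_val_one, h2] <;>
        nlinarith [h1]
    · fin_cases a <;> fin_cases b <;> simp [hij, hsucc]

/-- For real `μ ≠ 0`, `ν > 0` and `n ≥ 1`, the matrix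
`X = Ψ(J(μ+iν,n)) ⊕ Ψ(J(-(μ+iν),n)) ∈ gl(4n,ℝ)` is strongly `Ad_{GL(4n,ℝ)}`-real. -/
theorem stmt4 (μ ν : ℝ) (hμ : μ ≠ 0) (hν : 0 < ν) (n : ℕ) (hn : 1 ≤ n) :
    StronglyAdjReal
      (fromBlocks (Psi (jordanBlock ((⟨μ, ν⟩ : ℂ)) n)) 0 0
        (Psi (jordanBlock (-(⟨μ, ν⟩ : ℂ)) n))) := by
  classical
  set d : Matrix (Fin n × Fin 2) (Fin n × Fin 2) ℝ := Matrix.diagonal (altSign n) with hd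
  have hdd : d * d = 1 := by
    rw [hd, Matrix.diagonal_mul_diagonal]
    ext p q
    by_cases h : p = q <;> simp [Matrix.diagonal, Matrix.one_apply, h, altSign_mul_self]
  set gm : Matrix ((Fin n × Fin 2) ⊕ (Fin n × Fin 2)) ((Fin n × Fin 2) ⊕ (Fin n × Fin 2)) ℝ :=
    fromBlocks 0 d d 0 with hgm
  have hgg : gm * gm = 1 := by
    rw [hgm, fromBlocks_multiply]
    simp [hdd, ← Matrix.fromBlocks_one]
  refine ⟨⟨gm, gm, hgg, hgg⟩, ?_, ?_⟩
  · exact Units.ext hgg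
  · show gm * _ * gm = _
    rw [hgm, fromBlocks_multiply, fromBlocks_multiply]
    simp only [Matrix.zero_mul, Matrix.mul_zero, zero_add, add_zero,
      Matrix.mul_one, Matrix.one_mul]
    have h1 := diag_conj_psi (n := n) (-(⟨μ, ν⟩ : ℂ))
    have h2 := diag_conj_psi (n := n) ((⟨μ, ν⟩ : ℂ))
    rw [neg_neg] at h1
    rw [show d * Psi (jordanBlock (-(⟨μ, ν⟩ : ℂ)) n) * d = - Psi (jordanBlock (⟨μ, ν⟩ : ℂ) n) from h1,
        show d * Psi (jordanBlock ((⟨μ, ν⟩ : ℂ)) n) * d = - Psi (jordanBlock (-(⟨μ, ν⟩ : ℂ)) n) from h2]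
    ext (p|p) (q|q) <;> simp [fromBlocks]
end

section
/- Let D be ℝ, ℂ, or the real quaternions ℍ, let n ≥ 1, and let μ ∈ {1, -1}. Then the Jordan block A = J(μ,n) ∈ GL(n,D) is strongly reversible in GL(n,D); that is, there exists an invertible n×n matrix g over D with g² = I and g·A·g⁻¹ = A⁻¹. -/
open Matrix

set_option maxHeartbeats 1000000

/-!
In `R[X]/(X^n)` with basis `1, X, …, X^(n-1)`, the Jordan block `J(e,n)` is the transpose of
the matrix of multiplication by `e + X`. When `e² = 1`, the substitution `X ↦ -X/(1 + eX)` is an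
involutive algebra automorphism sending `e + X` to `e/(1 + eX) = (e + X)⁻¹`, so its matrix
conjugates `J(e,n)` to `J(e,n)⁻¹`. Over an arbitrary ring, `J(±1,n)` is the image of an integer
matrix, and strong reversibility is preserved by ring homomorphisms.
-/

open Polynomial

section Matrices

variable {ι : Type*} [Fintype ι] [DecidableEq ι]

theorem stronglyReversible_of_mul_self_eq_one {D : Type*} [Ring D] {A g : Matrix ι ι D}
    (hg : g * g = 1) (hgA : g * A * g * A = 1) : StronglyReversible A := by
  have hAg : A * (g * A * g) = 1 :=
    calc A * (g * A * g) = g * g * A * (g * A * g) := by rw [hg, one_mul]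
      _ = g * (g * A * g * A) * g := by simp only [mul_assoc]
      _ = 1 := by rw [hgA, mul_one, hg]
  exact ⟨⟨A, g * A * g, hAg, hgA⟩, rfl, ⟨g, g, hg, hg⟩, Units.ext hg, Units.ext rfl⟩

theorem StronglyReversible.map {R S : Type*} [Ring R] [Ring S] {A : Matrix ι ι R}
    (h : StronglyReversible A) (f : R →+* S) : StronglyReversible (A.map f) := by
  obtain ⟨a, rfl, g, hg, hga⟩ := h
  let F := Units.map (RingHom.mapMatrix (m := ι) f).toMonoidHom
  exact ⟨F a, rfl, F g, by rw [← map_mul, hg, map_one],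
    by rw [← map_inv, ← map_mul, ← map_mul, hga, map_inv]⟩

theorem stronglyReversible_transpose_leftMulMatrix {R S : Type*} [CommRing R] [Ring S]
    [Algebra R S] (b : Module.Basis ι R S) (σ : S →ₐ[R] S) (hσ : σ.comp σ = AlgHom.id R S)
    {x : S} (hx : x * σ x = 1) : StronglyReversible (Algebra.leftMulMatrix b x)ᵀ := by
  set G := LinearMap.toMatrix b b σ.toLinearMap
  set M := Algebra.leftMulMatrix b x
  have hGG : G * G = 1 := by
    rw [← LinearMap.toMatrix_mul, Module.End.mul_eq_comp, ← AlgHom.comp_toLinearMap, hσ,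
      AlgHom.toLinearMap_id, LinearMap.toMatrix_id]
  have hGMG : G * M * G = Algebra.leftMulMatrix b (σ x) := by
    simp only [G, M, Algebra.leftMulMatrix_apply, ← LinearMap.toMatrix_mul]
    congr 1
    ext y
    simp only [Module.End.mul_apply, AlgHom.toLinearMap_apply, Algebra.coe_lmul_eq_mul,
      LinearMap.mul_apply', map_mul]
    rw [← AlgHom.comp_apply σ σ, hσ, AlgHom.id_apply]
  have hMGMG : M * G * M * G = 1 := by
    rw [show M * G * M * G = M * (G * M * G) by simp only [mul_assoc], hGMG, ← map_mul, hx,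
      map_one]
  refine stronglyReversible_of_mul_self_eq_one (g := Gᵀ) ?_ ?_
  · rw [← transpose_mul, hGG, transpose_one]
  · rw [← transpose_mul, ← transpose_mul, ← transpose_mul, ← mul_assoc, ← mul_assoc, hMGMG,
      transpose_one]

end Matrices

section TruncatedPolynomial

variable {R : Type*} [CommRing R] (n : ℕ)

local notation "Q" => AdjoinRoot (X ^ n : R[X])

theorem AdjoinRoot.root_X_pow_pow : AdjoinRoot.root (X ^ n : R[X]) ^ n = 0 := by
  rw [← AdjoinRoot.mk_X, ← map_pow, AdjoinRoot.mk_self]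

theorem exists_involution_inverting_add_root {e : R} (he : e * e = 1) :
    ∃ σ : Q →ₐ[R] Q, σ.comp σ = AlgHom.id R Q ∧
      (algebraMap R Q e + AdjoinRoot.root _) * σ (algebraMap R Q e + AdjoinRoot.root _) = 1 := by
  set α := AdjoinRoot.root (X ^ n : R[X])
  set ε := algebraMap R Q e
  have hε : ε * ε = 1 := by rw [← map_mul, he, map_one]
  have hnil : IsNilpotent (ε * α) := ⟨n, by rw [mul_pow, AdjoinRoot.root_X_pow_pow, mul_zero]⟩
  obtain ⟨u, hu⟩ := hnil.isUnit_one_add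
  set w : Q := ↑u⁻¹
  have hw : w * (1 + ε * α) = 1 := by rw [← hu]; exact u.inv_mul
  let σ : Q →ₐ[R] Q := AdjoinRoot.liftAlgHom _ (Algebra.ofId R Q) (-α * w) (by
    rw [eval₂_X_pow, mul_pow, neg_pow, AdjoinRoot.root_X_pow_pow, mul_zero, zero_mul])
  have hσα : σ α = -α * w := AdjoinRoot.liftAlgHom_root _ _ _ _
  have hσε : σ ε = ε := σ.commutes e
  have hσw : σ w = 1 + ε * α := by
    have h := congrArg σ hw
    rw [map_mul, map_add, map_one, map_mul, hσε, hσα] at h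
    have hσw_w : σ w * w = 1 := by linear_combination h + σ w * hw
    linear_combination (1 + ε * α) * hσw_w - σ w * hw
  refine ⟨σ, AdjoinRoot.algHom_ext ?_, ?_⟩
  · change σ (σ α) = α
    rw [hσα, map_mul, map_neg, hσα, hσw]
    linear_combination α * hw
  · rw [map_add, hσε, hσα]
    linear_combination (1 + α * α * w) * hε - ε * α * hw

variable [Nontrivial R]

noncomputable def truncBasis : Module.Basis (Fin n) R Q :=
  (AdjoinRoot.powerBasis' (monic_X_pow n)).basis.reindex (finCongr (natDegree_X_pow n))

theorem truncBasis_apply (i : Fin n) :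
    truncBasis n i = AdjoinRoot.root (X ^ n : R[X]) ^ (i : ℕ) := by
  simp only [truncBasis, Module.Basis.reindex_apply, PowerBasis.coe_basis,
    AdjoinRoot.powerBasis'_gen]
  rfl

theorem truncBasis_repr_root_pow (k : ℕ) (j : Fin n) :
    (truncBasis n).repr (AdjoinRoot.root (X ^ n : R[X]) ^ k) j = if k = j then 1 else 0 := by
  rcases lt_or_ge k n with hk | hk
  · rw [← Fin.val_mk hk, ← truncBasis_apply, Module.Basis.repr_self, Finsupp.single_apply]
    simp [Fin.ext_iff]
  · rw [← Nat.add_sub_of_le hk, pow_add, AdjoinRoot.root_X_pow_pow, zero_mul, map_zero,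
      Finsupp.zero_apply, if_neg (by omega)]

theorem transpose_leftMulMatrix_eq_jordanBlock (e : R) :
    (Algebra.leftMulMatrix (truncBasis n)
      (algebraMap R Q e + AdjoinRoot.root (X ^ n : R[X])))ᵀ = jordanBlock e n := by
  ext i j
  rw [transpose_apply, Algebra.leftMulMatrix_eq_repr_mul, truncBasis_apply, add_mul,
    ← Algebra.smul_def, ← pow_succ', map_add, map_smul, Finsupp.add_apply, Finsupp.smul_apply,
    truncBasis_repr_root_pow, truncBasis_repr_root_pow, jordanBlock, of_apply]
  by_cases h : i = j
  · simp [h]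
  · simp [h, Fin.val_inj]

theorem stronglyReversible_jordanBlock {e : R} (he : e * e = 1) :
    StronglyReversible (jordanBlock e n) := by
  obtain ⟨σ, hσ, hx⟩ := exists_involution_inverting_add_root n he
  rw [← transpose_leftMulMatrix_eq_jordanBlock]
  exact stronglyReversible_transpose_leftMulMatrix _ σ hσ hx

end TruncatedPolynomial

theorem jordanBlock_map {R S : Type*} [Ring R] [Ring S] (f : R →+* S) (e : R) (n : ℕ) :
    (jordanBlock e n).map f = jordanBlock (f e) n := by
  ext i j
  simp only [jordanBlock, map_apply, of_apply, apply_ite f, map_one, map_zero]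

theorem stronglyReversible_jordanBlock_of_eq_one_or_eq_neg_one {D : Type*} [Ring D] {μ : D}
    (hμ : μ = 1 ∨ μ = -1) (n : ℕ) : StronglyReversible (jordanBlock μ n) := by
  obtain ⟨e, he, rfl⟩ : ∃ e : ℤ, e * e = 1 ∧ (e : D) = μ := by
    rcases hμ with rfl | rfl
    exacts [⟨1, by norm_num, by simp⟩, ⟨-1, by norm_num, by simp⟩]
  simpa only [jordanBlock_map, eq_intCast] using
    (stronglyReversible_jordanBlock n he).map (Int.castRingHom D)

theorem stmt5_general (n : ℕ) :
    (∀ μ : ℝ, μ = 1 ∨ μ = -1 → StronglyReversible (jordanBlock μ n)) ∧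
    (∀ μ : ℂ, μ = 1 ∨ μ = -1 → StronglyReversible (jordanBlock μ n)) ∧
    (∀ μ : Quaternion ℝ, μ = 1 ∨ μ = -1 → StronglyReversible (jordanBlock μ n)) :=
  ⟨fun _ hμ => stronglyReversible_jordanBlock_of_eq_one_or_eq_neg_one hμ n,
    fun _ hμ => stronglyReversible_jordanBlock_of_eq_one_or_eq_neg_one hμ n,
    fun _ hμ => stronglyReversible_jordanBlock_of_eq_one_or_eq_neg_one hμ n⟩

/-- For `D = ℝ, ℂ, ℍ`, `n ≥ 1` and `μ ∈ {1,-1}`, the Jordan block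
`A = J(μ,n) ∈ GL(n,D)` is strongly reversible in `GL(n,D)`. -/
theorem stmt5 (n : ℕ) (hn : 1 ≤ n) :
    (∀ μ : ℝ, μ = 1 ∨ μ = -1 → StronglyReversible (jordanBlock μ n)) ∧
    (∀ μ : ℂ, μ = 1 ∨ μ = -1 → StronglyReversible (jordanBlock μ n)) ∧
    (∀ μ : Quaternion ℝ, μ = 1 ∨ μ = -1 → StronglyReversible (jordanBlock μ n)) :=
  stmt5_general n
end

section
/- Let μ, ν be real numbers with ν > 0 and μ² + ν² ≠ 1, set z = μ + iν, and let n ≥ 1. Then the block-diagonal matrix A = Ψ(J(z,n)) ⊕ Ψ(J(z⁻¹,n)) ∈ GL(4n,ℝ), i.e., the direct sum of the real Jordan blocks J_ℝ(μ ± iν, 2n) and J_ℝ(μ/(μ²+ν²) ∓ i ν/(μ²+ν²), 2n), is strongly reversible in GL(4n,ℝ); that is, there exists an invertible 4n×4n real matrix g with g² = I and g·A·g⁻¹ = A⁻¹. -/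
open Matrix

set_option maxHeartbeats 1000000

/-
Over `ℂ`, `J(z⁻¹)` is conjugate to `J(z)⁻¹`: the equation `J(z) P J(z⁻¹) = P` can be solved
row by row for an upper triangular `P` with diagonal entries `(-z²)ⁱ`, invertible as `z ≠ 0`.
Realification is a ring homomorphism, so `Q = Ψ P` conjugates `Ψ J(z⁻¹)` to `(Ψ J(z))⁻¹`, and
then the involution `!![0, Q; Q⁻¹, 0]` conjugates `Ψ J(z) ⊕ Ψ J(z⁻¹)` to its inverse.
-/

section JordanBlock

variable {D : Type*} [Ring D] {n : ℕ}

lemma jordanBlock_apply_eq_add (lam : D) (i j : Fin n) :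
    jordanBlock lam n i j = (if i = j then lam else 0) + if (i : ℕ) + 1 = j then 1 else 0 := by
  by_cases h : i = j <;> simp [jordanBlock, h]

lemma jordanBlock_mul_of_apply (lam : D) (f : ℕ → ℕ → D) (hf : ∀ j < n, f n j = 0)
    (i j : Fin n) :
    (jordanBlock lam n * of fun i j : Fin n => f i j) i j = lam * f i j + f ((i : ℕ) + 1) j := by
  simp only [mul_apply, jordanBlock_apply_eq_add, add_mul, ite_mul, one_mul, zero_mul,
    Finset.sum_add_distrib, Finset.sum_ite_eq, Finset.mem_univ, if_true, of_apply]
  rw [Fin.sum_univ_eq_sum_range (fun k => if (i : ℕ) + 1 = k then f k j else 0),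
    Finset.sum_ite_eq]
  split_ifs with h
  · rfl
  · rw [show (i : ℕ) + 1 = n by simp at h; omega, hf j j.isLt]

lemma mul_jordanBlock_apply_of_val_eq_zero (lam : D) (M : Matrix (Fin n) (Fin n) D)
    {i j : Fin n} (hj : (j : ℕ) = 0) : (M * jordanBlock lam n) i j = M i j * lam := by
  simp [mul_apply, jordanBlock_apply_eq_add, hj]

lemma mul_jordanBlock_apply_of_val_eq_succ (lam : D) (M : Matrix (Fin n) (Fin n) D)
    {i j k : Fin n} (hj : (j : ℕ) = k + 1) :
    (M * jordanBlock lam n) i j = M i j * lam + M i k := by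
  have hk : ∀ l : Fin n, (l : ℕ) + 1 = j ↔ l = k := fun l => by rw [hj, Fin.ext_iff]; omega
  simp [mul_apply, jordanBlock_apply_eq_add, mul_add, Finset.sum_add_distrib, hk]

end JordanBlock

lemma det_jordanBlock {R : Type*} [CommRing R] (lam : R) (n : ℕ) :
    (jordanBlock lam n).det = lam ^ n := by
  rw [det_of_isUpperTriangular]
  · simp [jordanBlock]
  · intro i j (hij : j < i)
    have : (i : ℕ) + 1 ≠ j := by rw [Fin.lt_def] at hij; omega
    simp [jordanBlock, hij.ne', this]

lemma isUnit_jordanBlock {R : Type*} [CommRing R] {lam : R} (h : IsUnit lam) (n : ℕ) :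
    IsUnit (jordanBlock lam n) := by
  rw [isUnit_iff_isUnit_det, det_jordanBlock]
  exact h.pow n

section InvJordanConj

variable {K : Type*} [Field K]

/- The recursion is `J(λ) P J(λ⁻¹) = P` read entrywise: writing `J(c) = c + N`, it becomes
`λ² P N + N P + λ N P N = 0`. -/
def invJordanConjEntry (lam : K) : ℕ → ℕ → K
  | 0, 0 => 1
  | 0, _ + 1 => 0
  | _ + 1, 0 => 0
  | i + 1, j + 1 => -lam ^ 2 * invJordanConjEntry lam i j - lam * invJordanConjEntry lam (i + 1) j

lemma invJordanConjEntry_eq_zero_of_lt (lam : K) {i j : ℕ} (h : j < i) :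
    invJordanConjEntry lam i j = 0 := by
  induction j generalizing i with
  | zero => obtain ⟨i, rfl⟩ := Nat.exists_eq_add_one_of_ne_zero h.ne'; rfl
  | succ j ih =>
    obtain ⟨i, rfl⟩ := Nat.exists_eq_add_one_of_ne_zero (by omega : i ≠ 0)
    simp [invJordanConjEntry, ih (by omega : j < i), ih (by omega : j < i + 1)]

lemma invJordanConjEntry_self (lam : K) (i : ℕ) :
    invJordanConjEntry lam i i = (-lam ^ 2) ^ i := by
  induction i with
  | zero => simp [invJordanConjEntry]
  | succ i ih =>
    rw [invJordanConjEntry, ih, invJordanConjEntry_eq_zero_of_lt lam (Nat.lt_succ_self i)]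
    ring

def invJordanConj (lam : K) (n : ℕ) : Matrix (Fin n) (Fin n) K :=
  of fun i j => invJordanConjEntry lam i j

lemma isUnit_invJordanConj {lam : K} (hlam : lam ≠ 0) (n : ℕ) : IsUnit (invJordanConj lam n) := by
  have hP : (invJordanConj lam n).IsUpperTriangular := fun i j (h : j < i) =>
    invJordanConjEntry_eq_zero_of_lt lam h
  rw [isUnit_iff_isUnit_det, det_of_isUpperTriangular hP]
  simp only [invJordanConj, of_apply, invJordanConjEntry_self, isUnit_iff_ne_zero]
  exact Finset.prod_ne_zero_iff.2 fun i _ => pow_ne_zero _ (by simp [hlam])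

lemma jordanBlock_mul_invJordanConj_mul {lam : K} (hlam : lam ≠ 0) (n : ℕ) :
    jordanBlock lam n * invJordanConj lam n * jordanBlock lam⁻¹ n = invJordanConj lam n := by
  have hJP : jordanBlock lam n * invJordanConj lam n = of fun i j : Fin n =>
      lam * invJordanConjEntry lam i j + invJordanConjEntry lam (i + 1) j := by
    ext i j
    exact jordanBlock_mul_of_apply lam _ (fun j hj => invJordanConjEntry_eq_zero_of_lt lam hj) i j
  ext i j
  rw [hJP]
  rcases Nat.eq_zero_or_pos (j : ℕ) with hj | hj
  · rw [mul_jordanBlock_apply_of_val_eq_zero _ _ hj]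
    simp [invJordanConj, hj, invJordanConjEntry_eq_zero_of_lt lam (Nat.succ_pos i)]
    field_simp
  · obtain ⟨k, hjk⟩ : ∃ k : Fin n, (j : ℕ) = k + 1 := ⟨⟨j - 1, by omega⟩, by simp; omega⟩
    rw [mul_jordanBlock_apply_of_val_eq_succ _ _ hjk]
    simp only [invJordanConj, of_apply, hjk, invJordanConjEntry]
    field_simp
    ring

end InvJordanConj

/- `Ψ` puts `!![re z, im z; -im z, re z]` in place of `z`: the matrix of multiplication by
`conj z` in the basis `1, i`. -/
noncomputable def complexToRealMatrix : ℂ →+* Matrix (Fin 2) (Fin 2) ℝ :=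
  (Algebra.leftMulMatrix Complex.basisOneI).toRingHom.comp (starRingEnd ℂ)

noncomputable def psiRingHom (n : ℕ) :
    Matrix (Fin n) (Fin n) ℂ →+* Matrix (Fin n × Fin 2) (Fin n × Fin 2) ℝ :=
  (compRingEquiv (Fin n) (Fin 2) ℝ).toRingHom.comp complexToRealMatrix.mapMatrix

lemma psiRingHom_apply {n : ℕ} (A : Matrix (Fin n) (Fin n) ℂ) : psiRingHom n A = Psi A := by
  ext ⟨i, a⟩ ⟨j, b⟩
  simp [psiRingHom, complexToRealMatrix, Psi, Algebra.leftMulMatrix_complex]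

lemma stronglyReversible_fromBlocks {R ι : Type*} [Ring R] [Fintype ι] [DecidableEq ι]
    {a b p : (Matrix ι ι R)ˣ} (h : p * b * p⁻¹ = a⁻¹) :
    StronglyReversible (fromBlocks (a : Matrix ι ι R) 0 0 (b : Matrix ι ι R)) := by
  have h' : p⁻¹ * a * p = b⁻¹ := by
    rw [← inv_inv a, ← h]; group
  have hg : (fromBlocks 0 p ↑p⁻¹ 0 : Matrix (ι ⊕ ι) (ι ⊕ ι) R) * fromBlocks 0 p ↑p⁻¹ 0 = 1 := by
    simp [fromBlocks_multiply]
  refine ⟨⟨fromBlocks a 0 0 b, fromBlocks ↑a⁻¹ 0 0 ↑b⁻¹, ?_, ?_⟩, rfl,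
    ⟨fromBlocks 0 p ↑p⁻¹ 0, fromBlocks 0 p ↑p⁻¹ 0, hg, hg⟩, Units.ext hg, Units.ext ?_⟩
  · simp [fromBlocks_multiply]
  · simp [fromBlocks_multiply]
  · show (fromBlocks 0 p ↑p⁻¹ 0 : Matrix (ι ⊕ ι) (ι ⊕ ι) R) * fromBlocks a 0 0 b *
      fromBlocks 0 p ↑p⁻¹ 0 = fromBlocks ↑a⁻¹ 0 0 ↑b⁻¹
    simp [fromBlocks_multiply, ← Units.val_mul, h, h']

theorem stmt9_general (μ ν : ℝ) (hν : 0 < ν) (n : ℕ) :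
    StronglyReversible
      (fromBlocks (Psi (jordanBlock ((⟨μ, ν⟩ : ℂ)) n)) 0 0
        (Psi (jordanBlock ((⟨μ, ν⟩ : ℂ))⁻¹ n))) := by
  set z : ℂ := ⟨μ, ν⟩
  have hz : z ≠ 0 := fun h => hν.ne' (congrArg Complex.im h)
  obtain ⟨J, hJ⟩ := isUnit_jordanBlock hz.isUnit n
  obtain ⟨J', hJ'⟩ := isUnit_jordanBlock (inv_ne_zero hz).isUnit n
  obtain ⟨P, hP⟩ := isUnit_invJordanConj hz n
  have hJPJ : J * P * J' = P := by
    ext1; simpa [hJ, hJ', hP] using jordanBlock_mul_invJordanConj_mul hz n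
  have hconj : P * J' * P⁻¹ = J⁻¹ := by
    refine eq_inv_of_mul_eq_one_right ?_
    rw [← mul_assoc, ← mul_assoc, hJPJ, mul_inv_cancel]
  set f := Units.map (psiRingHom n).toMonoidHom
  rw [← hJ, ← hJ', ← psiRingHom_apply, ← psiRingHom_apply]
  exact stronglyReversible_fromBlocks (a := f J) (b := f J') (p := f P)
    (by simp only [← map_inv, ← map_mul, hconj])

/-- For real `μ, ν` with `ν > 0` and `μ² + ν² ≠ 1`, setting `z = μ + iν`, and
`n ≥ 1`, the matrix `A = Ψ(J(z,n)) ⊕ Ψ(J(z⁻¹,n)) ∈ GL(4n,ℝ)` is strongly reversible in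
`GL(4n,ℝ)`. -/
theorem stmt9 (μ ν : ℝ) (hν : 0 < ν) (h1 : μ ^ 2 + ν ^ 2 ≠ 1) (n : ℕ) (hn : 1 ≤ n) :
    StronglyReversible
      (fromBlocks (Psi (jordanBlock ((⟨μ, ν⟩ : ℂ)) n)) 0 0
        (Psi (jordanBlock ((⟨μ, ν⟩ : ℂ))⁻¹ n))) :=
  stmt9_general μ ν hν n
end

section
/- Let D = ℝ or D = ℂ, and let X be any n×n matrix over D. Then there exists an invertible n×n matrix g over D with g·X·g⁻¹ = -X if and only if there exists an invertible n×n matrix h over D with h² = I and h·X·h⁻¹ = -X. In other words, an element of gl(n,D) is Ad_{GL(n,D)}-real if and only if it is strongly Ad_{GL(n,D)}-real. -/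
open Matrix

set_option maxHeartbeats 1000000

/-!
Let `t` act on `Dⁿ` through `X`, making it a finitely generated torsion `D[t]`-module `V`, and let
`σ` be the involution `p(t) ↦ p(-t)` of `D[t]`. A matrix `g` with `g X g⁻¹ = -X` is exactly a
`σ`-semilinear automorphism of `V`, and a strong one is a `σ`-semilinear involution.

Write a nonzero annihilator of `V` as a divisor of `a · u · σ u` with `a`, `u`, `σ u` pairwise
coprime and every prime factor of `a` fixed by `σ` up to a unit. Then `V = V[a] ⊕ V[u] ⊕ V[σ u]`,
where `V[b]` is the `b`-torsion of `V`.
The automorphism `g` maps `V[u]` onto `V[σ u]`, so `(x, y) ↦ (g⁻¹ y, g x)` is an involution of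
`V[u] ⊕ V[σ u]`. By the structure theorem `V[a]` is a sum of cyclic modules `D[t] ⧸ (q)` with
`σ q` associated to `q`, and `p ↦ σ p` is an involution on each of them.
-/

open Polynomial Submodule

def HasSemilinearInvolution {R : Type*} [CommRing R] (σ : R →+* R) (M : Type*) [AddCommGroup M]
    [Module R M] : Prop :=
  ∃ h : M →ₛₗ[σ] M, Function.Involutive h

variable {R : Type*} [CommRing R] {M N : Type*} [AddCommGroup M] [Module R M]
  [AddCommGroup N] [Module R N]

namespace HasSemilinearInvolution

variable {σ : R →+* R}

theorem of_linearEquiv (hM : HasSemilinearInvolution σ M) (e : M ≃ₗ[R] N) :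
    HasSemilinearInvolution σ N := by
  obtain ⟨h, hh⟩ := hM
  exact ⟨e.toLinearMap ∘ₛₗ h ∘ₛₗ e.symm.toLinearMap, fun x => by simp [hh _]⟩

theorem prod (hM : HasSemilinearInvolution σ M) (hN : HasSemilinearInvolution σ N) :
    HasSemilinearInvolution σ (M × N) := by
  obtain ⟨h₁, hh₁⟩ := hM
  obtain ⟨h₂, hh₂⟩ := hN
  exact ⟨{ toFun := Prod.map h₁ h₂, map_add' := by simp, map_smul' := by simp },
    fun x => Prod.ext (hh₁ _) (hh₂ _)⟩

theorem pi {ι : Type*} {M : ι → Type*} [∀ i, AddCommGroup (M i)] [∀ i, Module R (M i)]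
    (hM : ∀ i, HasSemilinearInvolution σ (M i)) : HasSemilinearInvolution σ (∀ i, M i) := by
  choose h hh using hM
  refine ⟨{ toFun := fun x i => h i (x i), map_add' := ?_, map_smul' := ?_ },
    fun x => funext fun i => hh i (x i)⟩ <;> intros <;> ext <;> simp

theorem prod_of_semilinearEquiv [RingHomInvPair σ σ] (e : M ≃ₛₗ[σ] N) :
    HasSemilinearInvolution σ (M × N) :=
  ⟨{ toFun := fun x => (e.symm x.2, e x.1)
     map_add' := fun x y => Prod.ext (map_add e.symm x.2 y.2) (map_add e x.1 y.1)
     map_smul' := fun r x => Prod.ext (e.symm.map_smulₛₗ r x.2) (e.map_smulₛₗ r x.1) },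
    fun x => by simp⟩

theorem of_isCompl {A B : Submodule R M} (hAB : IsCompl A B)
    (hA : HasSemilinearInvolution σ A) (hB : HasSemilinearInvolution σ B) :
    HasSemilinearInvolution σ M :=
  (hA.prod hB).of_linearEquiv (prodEquivOfIsCompl A B hAB)

theorem of_isCompl_of_semilinearEquiv [RingHomInvPair σ σ] {A B : Submodule R M}
    (hAB : IsCompl A B) (e : A ≃ₛₗ[σ] B) : HasSemilinearInvolution σ M :=
  (prod_of_semilinearEquiv e).of_linearEquiv (prodEquivOfIsCompl A B hAB)

theorem quotient_span_singleton [RingHomInvPair σ σ] {q : R} (hq : Associated (σ q) q) :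
    HasSemilinearInvolution σ (R ⧸ R ∙ q) := by
  refine ⟨(R ∙ q).mapQ (R ∙ q) σ.toSemilinearMap fun x hx => ?_, fun x => ?_⟩
  · obtain ⟨r, rfl⟩ := mem_span_singleton.mp hx
    show σ (r • q) ∈ R ∙ q
    rw [smul_eq_mul, map_mul]
    exact Ideal.mul_mem_left _ _ (Ideal.mem_span_singleton.mpr hq.symm.dvd)
  · obtain ⟨r, rfl⟩ := Submodule.Quotient.mk_surjective _ x
    rw [mapQ_apply, mapQ_apply, RingHom.coe_toSemilinearMap, RingHomInvPair.comp_apply_eq]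

end HasSemilinearInvolution

namespace Submodule

theorem isCompl_torsionBy_of_isCoprime {a b : R} (hab : IsCoprime a b)
    (hM : Module.IsTorsionBy R M (a * b)) : IsCompl (torsionBy R M a) (torsionBy R M b) := by
  obtain ⟨r, s, hrs⟩ := hab
  have hx : ∀ x : M, r • a • x + s • b • x = x := fun x => by
    rw [← mul_smul, ← mul_smul, ← add_smul, hrs, one_smul]
  refine ⟨disjoint_def.mpr fun x ha hb => ?_, codisjoint_iff.mpr (eq_top_iff'.mpr fun x => ?_)⟩
  · rw [← hx x, (mem_torsionBy_iff _ _).mp ha, (mem_torsionBy_iff _ _).mp hb, smul_zero,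
      smul_zero, add_zero]
  · refine (hx x) ▸ mem_sup.mpr ⟨s • b • x, ?_, r • a • x, ?_, add_comm _ _⟩
    · rw [mem_torsionBy_iff, smul_comm a s, ← mul_smul a b, @hM x, smul_zero]
    · rw [mem_torsionBy_iff, smul_comm b r, ← mul_smul b a, mul_comm, @hM x, smul_zero]

theorem map_torsionBy_semilinearEquiv {R₂ N₂ : Type*} [CommRing R₂] [AddCommGroup N₂]
    [Module R₂ N₂] {σ₁₂ : R →+* R₂} {σ₂₁ : R₂ →+* R} [RingHomInvPair σ₁₂ σ₂₁]
    [RingHomInvPair σ₂₁ σ₁₂] (e : M ≃ₛₗ[σ₁₂] N₂) (a : R) :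
    (torsionBy R M a).map (e : M →ₛₗ[σ₁₂] N₂) = torsionBy R₂ N₂ (σ₁₂ a) := by
  ext y
  rw [mem_map_equiv, mem_torsionBy_iff, mem_torsionBy_iff, ← e.symm.map_eq_zero_iff,
    map_smulₛₗ, RingHomInvPair.comp_apply_eq]

end Submodule

section Involution

variable {σ : R →+* R} [RingHomInvPair σ σ]

theorem Prime.map_of_ringHomInvPair {p : R} (hp : Prime p) : Prime (σ p) :=
  comap_prime σ σ (fun _ => RingHomInvPair.comp_apply_eq) (by rwa [RingHomInvPair.comp_apply_eq])

theorem dvd_map_iff_map_dvd {p q : R} : p ∣ σ q ↔ σ p ∣ q := by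
  refine ⟨fun h => ?_, fun h => ?_⟩ <;> simpa [RingHomInvPair.comp_apply_eq] using map_dvd σ h

variable [IsDomain R] [IsPrincipalIdealRing R]

theorem isCoprime_mul_map_mul_of_not_dvd {a u r : R} (hr : Prime r) (hrσ : ¬Associated (σ r) r)
    (hru : ¬r ∣ σ u) (hself : ∀ p, Prime p → p ∣ a → Associated (σ p) p)
    (hu : IsCoprime u (σ u)) (hau : IsCoprime a (u * σ u)) :
    IsCoprime (u * r) (σ (u * r)) ∧ IsCoprime a (u * r * σ (u * r)) := by
  have hσr : Prime (σ r) := hr.map_of_ringHomInvPair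
  have hr_σr : ¬r ∣ σ r := fun h => hrσ (hr.associated_of_dvd hσr h).symm
  have hσr_u : ¬σ r ∣ u := fun h => hru (dvd_map_iff_map_dvd.mpr h)
  have hr_a : ¬r ∣ a := fun h => hrσ (hself r hr h)
  have hσr_a : ¬σ r ∣ a := fun h =>
    hrσ (by simpa [RingHomInvPair.comp_apply_eq] using (hself _ hσr h).symm)
  rw [map_mul]
  refine ⟨(hu.mul_right (hσr.coprime_iff_not_dvd.mpr hσr_u).symm).mul_left
    ((hr.coprime_iff_not_dvd.mpr hru).mul_right (hr.coprime_iff_not_dvd.mpr hr_σr)), ?_⟩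
  rw [mul_mul_mul_comm]
  exact hau.mul_right ((hr.coprime_iff_not_dvd.mpr hr_a).symm.mul_right
    (hσr.coprime_iff_not_dvd.mpr hσr_a).symm)

variable (σ) in
theorem exists_dvd_selfPaired_mul_mul_map {c : R} (hc : c ≠ 0) :
    ∃ a u : R, a ≠ 0 ∧ (∀ p, Prime p → p ∣ a → Associated (σ p) p) ∧
      IsCoprime u (σ u) ∧ IsCoprime a (u * σ u) ∧ c ∣ a * (u * σ u) := by
  induction c using UniqueFactorizationMonoid.induction_on_prime with
  | h₁ => exact absurd rfl hc
  | h₂ c hcu =>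
    refine ⟨1, 1, one_ne_zero, fun p hp h => absurd (isUnit_of_dvd_one h) hp.not_isUnit, ?_, ?_,
      hcu.dvd⟩ <;> simpa using isCoprime_one_left
  | h₃ c p hc0 hp ih =>
    obtain ⟨a, u, ha, hself, hu, hau, hdvd⟩ := ih hc0
    by_cases hpσ : Associated (σ p) p
    · refine ⟨p * a, u, mul_ne_zero hp.ne_zero ha, fun q hq hqa => ?_, hu, ?_,
        mul_assoc p a _ ▸ mul_dvd_mul_left p hdvd⟩
      · rcases hq.dvd_or_dvd hqa with h | h
        · have hqp := hq.associated_of_dvd hp h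
          exact (hqp.map σ).trans (hpσ.trans hqp.symm)
        · exact hself q hq h
      · refine IsCoprime.mul_left (hp.coprime_iff_not_dvd.mpr fun h => ?_) hau
        have hpu : p ∣ u := by
          rcases hp.dvd_or_dvd h with h | h
          · exact h
          · exact hpσ.symm.dvd.trans (dvd_map_iff_map_dvd.mp h)
        exact hp.not_isUnit (hu.isUnit_of_dvd' hpu (hpσ.symm.dvd.trans (map_dvd σ hpu)))
    -- put whichever of `p`, `σ p` keeps `u` coprime to `σ u` into `u`
    · obtain ⟨r, hr, hrσ, hru, hpr⟩ :
          ∃ r, Prime r ∧ ¬Associated (σ r) r ∧ ¬r ∣ σ u ∧ p ∣ r * σ r := by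
        by_cases hpu : p ∣ σ u
        · refine ⟨σ p, hp.map_of_ringHomInvPair, ?_, fun h => ?_, ?_⟩
          · rw [RingHomInvPair.comp_apply_eq]
            exact fun h => hpσ h.symm
          · exact hp.not_isUnit (hu.isUnit_of_dvd'
              (by simpa [RingHomInvPair.comp_apply_eq] using map_dvd σ h) hpu)
          · rw [RingHomInvPair.comp_apply_eq]
            exact dvd_mul_left p _
        · exact ⟨p, hp, hpσ, hpu, dvd_mul_right p _⟩
      obtain ⟨hu', hau'⟩ := isCoprime_mul_map_mul_of_not_dvd hr hrσ hru hself hu hau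
      refine ⟨a, u * r, ha, hself, hu', hau', ?_⟩
      rw [map_mul, mul_mul_mul_comm, ← mul_assoc, mul_comm p c]
      exact mul_dvd_mul hdvd hpr

end Involution

namespace HasSemilinearInvolution

variable {σ : R →+* R} [RingHomInvPair σ σ]

theorem of_isTorsionBy_mul_map (ψ : M ≃ₛₗ[σ] M) {u : R} (hu : IsCoprime u (σ u))
    (hM : Module.IsTorsionBy R M (u * σ u)) : HasSemilinearInvolution σ M :=
  of_isCompl_of_semilinearEquiv (isCompl_torsionBy_of_isCoprime hu hM)
    (ψ.ofSubmodules _ _ (map_torsionBy_semilinearEquiv ψ u))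

variable [IsDomain R] [IsPrincipalIdealRing R]

theorem of_isTorsionBy_selfPaired [Module.Finite R M] {a : R} (ha : a ≠ 0)
    (hM : Module.IsTorsionBy R M a) (hself : ∀ p, Prime p → p ∣ a → Associated (σ p) p) :
    HasSemilinearInvolution σ M := by
  obtain ⟨ι, _, p, hp, e, ⟨E⟩⟩ := Module.equiv_directSum_of_isTorsion
    fun x => ⟨⟨a, mem_nonZeroDivisors_of_ne_zero ha⟩, @hM x⟩
  classical
  have hdvd : ∀ i, p i ^ e i ∣ a := fun i => by
    have h := congrArg E (@hM (E.symm (DirectSum.lof R ι _ i (Submodule.Quotient.mk 1))))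
    rw [map_smul, E.apply_symm_apply, map_zero, ← map_smul, ← Submodule.Quotient.mk_smul,
      smul_eq_mul, mul_one, DirectSum.lof_eq_of, (DirectSum.of_injective i).eq_iff' (map_zero _),
      Submodule.Quotient.mk_eq_zero] at h
    exact Ideal.mem_span_singleton.mp h
  refine ((pi fun i => quotient_span_singleton ?_).of_linearEquiv
    (DirectSum.linearEquivFunOnFintype R ι _).symm).of_linearEquiv E.symm
  rcases eq_or_ne (e i) 0 with he | he
  · simp [he]
  · rw [map_pow]
    exact (hself _ (hp i).prime ((dvd_pow_self _ he).trans (hdvd i))).pow_pow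

theorem of_semilinearEquiv [Module.Finite R M] (hM : Module.IsTorsion R M)
    (ψ : M ≃ₛₗ[σ] M) : HasSemilinearInvolution σ M := by
  obtain ⟨c, hcM, hc⟩ := annihilator_top_inter_nonZeroDivisors hM
  obtain ⟨a, u, ha, hself, hu, hau, hdvd⟩ :=
    exists_dvd_selfPaired_mul_mul_map σ (nonZeroDivisors.ne_zero hc)
  have hM' : Module.IsTorsionBy R M (a * (u * σ u)) := fun x => by
    obtain ⟨d, hd⟩ := hdvd
    rw [hd, mul_comm, mul_smul, mem_annihilator.mp hcM x mem_top, smul_zero]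
  have hψ : (torsionBy R M (u * σ u)).map (ψ : M →ₛₗ[σ] M) = torsionBy R M (u * σ u) := by
    rw [map_torsionBy_semilinearEquiv, map_mul, RingHomInvPair.comp_apply_eq, mul_comm]
  exact of_isCompl (isCompl_torsionBy_of_isCoprime hau hM')
    (of_isTorsionBy_selfPaired ha (torsionBy_isTorsionBy a) hself)
    (of_isTorsionBy_mul_map (ψ.ofSubmodules _ _ hψ) hu (torsionBy_isTorsionBy _))

end HasSemilinearInvolution

theorem SemiconjBy.aeval {S A : Type*} [CommSemiring S] [Semiring A] [Algebra S A] {φ a b : A}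
    (h : SemiconjBy φ a b) (p : S[X]) : SemiconjBy φ (aeval a p) (aeval b p) := by
  induction p using Polynomial.induction_on with
  | C r =>
    simp only [aeval_C]
    exact (Algebra.commutes r φ).symm
  | add p q hp hq => simpa using hp.add_right hq
  | monomial n r ih => simpa [pow_succ, ← mul_assoc] using ih.mul_right h

instance Polynomial.ringHomInvPair_compRingHom_neg_X {K : Type*} [CommRing K] :
    RingHomInvPair (compRingHom (-X : K[X])) (compRingHom (-X)) :=
  ⟨RingHom.ext comp_neg_X_comp_neg_X, RingHom.ext comp_neg_X_comp_neg_X⟩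

namespace Module.AEval'

variable {K V : Type*} [CommRing K] [AddCommGroup V] [Module K V] {f : Module.End K V}

noncomputable def semilinearOfSemiconjBy {φ : Module.End K V} (hφ : SemiconjBy φ f (-f)) :
    AEval' f →ₛₗ[compRingHom (-X : K[X])] AEval' f where
  toFun x := of f (φ ((of f).symm x))
  map_add' x y := by simp
  map_smul' p x := by
    rw [AEval.of_symm_smul, coe_compRingHom_apply, ← AEval.of_aeval_smul, aeval_comp, map_neg,
      aeval_X, Module.End.smul_def, Module.End.smul_def, ← Module.End.mul_apply,
      (hφ.aeval p).eq, Module.End.mul_apply]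

noncomputable def semilinearEquivOfSemiconjBy (φ : (Module.End K V)ˣ)
    (hφ : SemiconjBy (φ : Module.End K V) f (-f)) :
    AEval' f ≃ₛₗ[compRingHom (-X : K[X])] AEval' f :=
  .ofLinearMap (semilinearOfSemiconjBy hφ) (semilinearOfSemiconjBy (φ := ↑φ⁻¹)
      (by simpa only [neg_neg] using hφ.units_inv_symm_left.neg_right))
    (by ext x; simp [semilinearOfSemiconjBy, ← Module.End.mul_apply])
    (by ext x; simp [semilinearOfSemiconjBy, ← Module.End.mul_apply])

noncomputable def toEnd (h : AEval' f →ₛₗ[compRingHom (-X : K[X])] AEval' f) : Module.End K V where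
  toFun v := (of f).symm (h (of f v))
  map_add' v w := by simp
  map_smul' t v := by
    rw [map_smul, ← AEval.C_smul, h.map_smulₛₗ, coe_compRingHom_apply, C_comp, AEval.C_smul,
      map_smul, RingHom.id_apply]

theorem semiconjBy_toEnd (h : AEval' f →ₛₗ[compRingHom (-X : K[X])] AEval' f) :
    SemiconjBy (toEnd h) f (-f) := by
  ext v
  simp only [toEnd, Module.End.mul_apply, LinearMap.coe_mk, AddHom.coe_mk, LinearMap.neg_apply]
  rw [← X_smul_of, h.map_smulₛₗ, coe_compRingHom_apply, X_comp, neg_smul, map_neg,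
    of_symm_X_smul]

theorem toEnd_mul_self {h : AEval' f →ₛₗ[compRingHom (-X : K[X])] AEval' f}
    (hh : Function.Involutive h) : toEnd h * toEnd h = 1 := by
  ext v
  simp [toEnd, hh _]

end Module.AEval'

theorem Module.End.exists_mul_self_eq_one_semiconjBy_neg {K V : Type*} [Field K] [AddCommGroup V]
    [Module K V] [FiniteDimensional K V] {f : Module.End K V} (φ : (Module.End K V)ˣ)
    (hφ : SemiconjBy (φ : Module.End K V) f (-f)) :
    ∃ h : Module.End K V, h * h = 1 ∧ SemiconjBy h f (-f) := by
  obtain ⟨h, hh⟩ := HasSemilinearInvolution.of_semilinearEquiv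
    (Module.AEval.isTorsion_of_finiteDimensional K V f)
    (Module.AEval'.semilinearEquivOfSemiconjBy φ hφ)
  exact ⟨_, Module.AEval'.toEnd_mul_self hh, Module.AEval'.semiconjBy_toEnd h⟩

theorem Matrix.adjReal_iff_stronglyAdjReal {K ι : Type*} [Field K] [Fintype ι] [DecidableEq ι]
    (X : Matrix ι ι K) : AdjReal X ↔ StronglyAdjReal X := by
  refine ⟨fun ⟨g, hg⟩ => ?_, fun ⟨g, _, hg⟩ => ⟨g, hg⟩⟩
  have hgX : SemiconjBy (g : Matrix ι ι K) X (-X) := (Units.mul_inv_eq_iff_eq_mul g).mp hg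
  obtain ⟨h, hh, hhX⟩ := Module.End.exists_mul_self_eq_one_semiconjBy_neg
    (Units.map (toLinAlgEquiv' : Matrix ι ι K ≃ₐ[K] _).toMonoidHom g)
    (by simpa using hgX.map (toLinAlgEquiv' : Matrix ι ι K ≃ₐ[K] _))
  set H := toLinAlgEquiv'.symm h
  have hH : H * H = 1 := by rw [← map_mul, hh, map_one]
  have hHX : H * X = -X * H := by
    simpa only [map_neg, AlgEquiv.symm_apply_apply] using
      (hhX.map (toLinAlgEquiv'.symm : _ ≃ₐ[K] Matrix ι ι K)).eq
  refine ⟨⟨H, H, hH, hH⟩, Units.ext hH, ?_⟩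
  rw [Units.inv_mk, hHX, mul_assoc, hH, mul_one]

/-- For `D = ℝ` or `ℂ`, an element of `gl(n,D)` is `Ad_{GL(n,D)}`-real if and
only if it is strongly `Ad_{GL(n,D)}`-real. -/
theorem stmt13 (n : ℕ) :
    (∀ X : Matrix (Fin n) (Fin n) ℝ, AdjReal X ↔ StronglyAdjReal X) ∧
    (∀ X : Matrix (Fin n) (Fin n) ℂ, AdjReal X ↔ StronglyAdjReal X) :=
  ⟨Matrix.adjReal_iff_stronglyAdjReal, Matrix.adjReal_iff_stronglyAdjReal⟩
end

section
/- Let (λ₁,m₁),…,(λ_k,m_k) be pairs with λ_i ∈ ℂ \ {0} and m_i ≥ 1, and let A ∈ GL(n,ℂ) be the block-diagonal matrix J(λ₁,m₁) ⊕ ⋯ ⊕ J(λ_k,m_k), where n = Σm_i. Then there exists an invertible complex matrix g with g·A·g⁻¹ = A⁻¹ if and only if the multiset {(λ₁,m₁),…,(λ_k,m_k)} equals its image under the map (λ,m) ↦ (λ⁻¹,m); equivalently, the Jordan blocks can be partitioned into pairs {J(λ,s), J(λ⁻¹,s)} with λ ∉ {0,1,-1} and singletons {J(μ,m)} with μ ∈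 {1,-1}. -/
open Matrix

set_option maxHeartbeats 1000000

namespace Stmt16Aux

lemma sum_fin_eq {m : ℕ} (c : ℕ) (f : Fin m → ℂ) :
    (∑ t : Fin m, (if c = (t : ℕ) then f t else 0)) = if h : c < m then f ⟨c, h⟩ else 0 := by
  by_cases h : c < m
  · rw [dif_pos h]
    rw [Finset.sum_congr rfl (g := fun t => if t = (⟨c, h⟩ : Fin m) then f t else 0)
      (fun t _ => by simp [Fin.ext_iff, eq_comm])]
    simp
  · rw [dif_neg h]
    apply Finset.sum_eq_zero
    intro t _
    rw [if_neg]
    intro hc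
    exact h (hc ▸ t.isLt)

lemma jordanBlock_apply {m : ℕ} (lam : ℂ) (i j : Fin m) :
    jordanBlock lam m i j =
      if (i : ℕ) = (j : ℕ) then lam else if (i : ℕ) + 1 = (j : ℕ) then 1 else 0 := by
  simp [jordanBlock, Fin.ext_iff]

lemma jordanBlock_zero_apply {m : ℕ} (i j : Fin m) :
    jordanBlock (0 : ℂ) m i j = if (i : ℕ) + 1 = (j : ℕ) then 1 else 0 := by
  rw [jordanBlock_apply]
  rcases eq_or_ne (i : ℕ) (j : ℕ) with h | h
  · rw [if_pos h, if_neg (by omega)]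
  · rw [if_neg h]

lemma jordanBlock_eq {m : ℕ} (lam : ℂ) :
    jordanBlock lam m = lam • (1 : Matrix (Fin m) (Fin m) ℂ) + jordanBlock 0 m := by
  ext i j
  simp only [Matrix.add_apply, Matrix.smul_apply, Matrix.one_apply, jordanBlock_apply,
    jordanBlock_zero_apply, smul_eq_mul]
  rcases eq_or_ne i j with rfl | h
  · simp [if_neg (by omega : ¬ (i:ℕ)+1 = (i:ℕ))]
  · have h' : ¬ (i : ℕ) = (j : ℕ) := fun hc => h (Fin.ext hc)
    simp [h, h']

lemma shift_mul {m : ℕ} (B : Matrix (Fin m) (Fin m) ℂ) (i j : Fin m) :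
    (jordanBlock (0 : ℂ) m * B) i j =
      if h : (i : ℕ) + 1 < m then B ⟨(i : ℕ) + 1, h⟩ j else 0 := by
  rw [mul_apply]
  have : ∀ t : Fin m, jordanBlock (0:ℂ) m i t * B t j
      = if (i:ℕ)+1 = (t:ℕ) then B t j else 0 := by
    intro t
    rw [jordanBlock_zero_apply]
    split <;> simp
  rw [Finset.sum_congr rfl (fun t _ => this t), sum_fin_eq]

lemma mul_shift {m : ℕ} (B : Matrix (Fin m) (Fin m) ℂ) (i j : Fin m) :
    (B * jordanBlock (0 : ℂ) m) i j =
      if h : 0 < (j : ℕ) then B i ⟨(j : ℕ) - 1, by omega⟩ else 0 := by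
  rw [mul_apply]
  have : ∀ t : Fin m, B i t * jordanBlock (0:ℂ) m t j
      = if ((j:ℕ) - 1) = (t:ℕ) ∧ 0 < (j:ℕ) then B i t else 0 := by
    intro t
    rw [jordanBlock_zero_apply]
    rcases eq_or_ne ((t:ℕ)+1) ((j:ℕ)) with h | h
    · rw [if_pos h, if_pos ⟨by omega, by omega⟩, mul_one]
    · rw [if_neg h, if_neg (by omega), mul_zero]
  rw [Finset.sum_congr rfl (fun t _ => this t)]
  by_cases hj : 0 < (j : ℕ)
  · simp only [hj, and_true]
    rw [sum_fin_eq ((j:ℕ)-1) (fun t => B i t), dif_pos (by omega : (j:ℕ)-1 < m)]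
    simp
  · rw [dif_neg hj]
    apply Finset.sum_eq_zero
    intro t _
    rw [if_neg (by omega)]

/-- Explicit inverse of a Jordan block. -/
noncomputable def jinv (μ : ℂ) (m : ℕ) : Matrix (Fin m) (Fin m) ℂ :=
  Matrix.of fun i j => if (i : ℕ) ≤ (j : ℕ) then μ⁻¹ * (-μ⁻¹) ^ ((j : ℕ) - (i : ℕ)) else 0

lemma jinv_apply {m : ℕ} (μ : ℂ) (i j : Fin m) :
    jinv μ m i j = if (i : ℕ) ≤ (j : ℕ) then μ⁻¹ * (-μ⁻¹) ^ ((j : ℕ) - (i : ℕ)) else 0 := rfl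

lemma jordan_mul_jinv {m : ℕ} {μ : ℂ} (hμ : μ ≠ 0) :
    jordanBlock μ m * jinv μ m = 1 := by
  rw [jordanBlock_eq, add_mul, smul_mul_assoc, one_mul]
  ext i j
  rw [Matrix.add_apply, Matrix.smul_apply, shift_mul, smul_eq_mul, jinv_apply]
  have hone : (1 : Matrix (Fin m) (Fin m) ℂ) i j = if (i:ℕ) = (j:ℕ) then 1 else 0 := by
    simp [Matrix.one_apply, Fin.ext_iff]
  rw [hone]
  rcases lt_trichotomy (i : ℕ) (j : ℕ) with hij | hij | hij
  · -- i < j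
    rw [if_pos (le_of_lt hij), if_neg (by omega)]
    have h1 : (i:ℕ) + 1 < m := by omega
    rw [dif_pos h1, jinv_apply, if_pos (by simp; omega)]
    obtain ⟨d, hd⟩ : ∃ d, (j:ℕ) - (i:ℕ) = d + 1 := ⟨(j:ℕ) - (i:ℕ) - 1, by omega⟩
    have hd2 : (j:ℕ) - ((i:ℕ) + 1) = d := by omega
    simp only [hd, hd2, pow_succ]
    field_simp
    ring
  · -- i = j
    rw [if_pos (le_of_eq hij), if_pos hij]
    have hij' : (j:ℕ) - (i:ℕ) = 0 := by omega
    rw [hij', pow_zero, mul_one]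
    have : ∀ (h : (i:ℕ)+1 < m),
        jinv μ m ⟨(i:ℕ)+1, h⟩ j = 0 := by
      intro h
      rw [jinv_apply, if_neg (by simp; omega)]
    rcases Nat.lt_or_ge ((i:ℕ)+1) m with h | h
    · rw [dif_pos h, this h, add_zero, mul_inv_cancel₀ hμ]
    · rw [dif_neg (by omega), add_zero, mul_inv_cancel₀ hμ]
  · -- j < i
    rw [if_neg (by omega), if_neg (by omega)]
    have : ∀ (h : (i:ℕ)+1 < m), jinv μ m ⟨(i:ℕ)+1, h⟩ j = 0 := by
      intro h
      rw [jinv_apply, if_neg (by simp; omega)]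
    rcases Nat.lt_or_ge ((i:ℕ)+1) m with h | h
    · rw [dif_pos h, this h, mul_zero, add_zero]
    · rw [dif_neg (by omega), mul_zero, add_zero]

/-- The Jordan block as a unit. -/
noncomputable def jUnit (μ : ℂ) (m : ℕ) (hμ : μ ≠ 0) : (Matrix (Fin m) (Fin m) ℂ)ˣ :=
  ⟨jordanBlock μ m, jinv μ m, jordan_mul_jinv hμ, mul_eq_one_comm.mp (jordan_mul_jinv hμ)⟩


section SimUpper

variable {m : ℕ}

lemma mpow_zero_entry {M : Matrix (Fin m) (Fin m) ℂ}
    (hM : ∀ i j : Fin m, ¬ ((i:ℕ) < (j:ℕ)) → M i j = 0) :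
    ∀ (r : ℕ) (i j : Fin m), (j:ℕ) < (i:ℕ) + r → (M ^ r) i j = 0 := by
  intro r
  induction r with
  | zero =>
    intro i j h
    rw [pow_zero]
    simp only [Matrix.one_apply]
    rw [if_neg]
    intro hc
    rw [hc] at h
    omega
  | succ r ih =>
    intro i j h
    rw [pow_succ', mul_apply]
    apply Finset.sum_eq_zero
    intro t _
    rcases Nat.lt_or_ge (i:ℕ) (t:ℕ) with ht | ht
    · rw [ih t j (by omega), mul_zero]
    · rw [hM i t (by omega), zero_mul]

lemma mpow_diag_entry {M : Matrix (Fin m) (Fin m) ℂ}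
    (hM : ∀ i j : Fin m, ¬ ((i:ℕ) < (j:ℕ)) → M i j = 0)
    (hsup : ∀ i j : Fin m, (i:ℕ) + 1 = (j:ℕ) → M i j ≠ 0) :
    ∀ (r : ℕ) (i j : Fin m), (i:ℕ) + r = (j:ℕ) → (M ^ r) i j ≠ 0 := by
  intro r
  induction r with
  | zero =>
    intro i j h
    rw [pow_zero]
    have : i = j := Fin.ext (by omega)
    simp [this, Matrix.one_apply]
  | succ r ih =>
    intro i j h
    have h1 : (i:ℕ) + 1 < m := by omega
    rw [pow_succ', mul_apply]
    rw [Finset.sum_eq_single (⟨(i:ℕ)+1, h1⟩ : Fin m)]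
    · exact mul_ne_zero (hsup i _ rfl) (ih _ j (by simp; omega))
    · intro t _ ht
      rcases Nat.lt_or_ge (i:ℕ) (t:ℕ) with h2 | h2
      · have h3 : (i:ℕ) + 1 ≠ (t:ℕ) := fun hc => ht (Fin.ext hc.symm)
        rw [mpow_zero_entry hM r t j (by omega), mul_zero]
      · rw [hM i t (by omega), zero_mul]
    · intro hc
      exact absurd (Finset.mem_univ _) hc

theorem sim_upper (lam : ℂ) (B : Matrix (Fin m) (Fin m) ℂ)
    (hup : ∀ i j : Fin m, ¬ ((i:ℕ) ≤ (j:ℕ)) → B i j = 0)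
    (hdiag : ∀ i : Fin m, B i i = lam)
    (hsup : ∀ i j : Fin m, (i:ℕ) + 1 = (j:ℕ) → B i j ≠ 0) :
    ∃ g : (Matrix (Fin m) (Fin m) ℂ)ˣ, g.val * jordanBlock lam m * (g⁻¹).val = B := by
  rcases Nat.eq_zero_or_pos m with rfl | hm
  · exact ⟨1, Subsingleton.elim _ _⟩
  set M : Matrix (Fin m) (Fin m) ℂ := B - lam • 1 with hMdef
  have hBM : B = lam • 1 + M := by rw [hMdef]; abel
  have hM : ∀ i j : Fin m, ¬ ((i:ℕ) < (j:ℕ)) → M i j = 0 := by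
    intro i j h
    rw [hMdef]
    simp only [Matrix.sub_apply, Matrix.smul_apply, Matrix.one_apply, smul_eq_mul]
    rcases eq_or_ne i j with rfl | hij
    · rw [hdiag i, if_pos rfl, mul_one, sub_self]
    · have hij' : (i:ℕ) ≠ (j:ℕ) := fun hc => hij (Fin.ext hc)
      rw [hup i j (by omega), if_neg hij, mul_zero, sub_zero]
  have hMsup : ∀ i j : Fin m, (i:ℕ) + 1 = (j:ℕ) → M i j ≠ 0 := by
    intro i j h
    rw [hMdef]
    simp only [Matrix.sub_apply, Matrix.smul_apply, Matrix.one_apply, smul_eq_mul]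
    rw [if_neg (by simp [Fin.ext_iff]; omega), mul_zero, sub_zero]
    exact hsup i j h
  have hlast : m - 1 < m := by omega
  set g : Matrix (Fin m) (Fin m) ℂ :=
    Matrix.of (fun i j : Fin m => (M ^ (m - 1 - (j:ℕ))) i ⟨m-1, hlast⟩) with hgdef
  have hgtri : g.BlockTriangular id := by
    intro i j hij
    simp only [id] at hij
    have : (m - 1 : ℕ) < (i:ℕ) + (m - 1 - (j:ℕ)) := by
      have := j.isLt; have := i.isLt
      have hij' : (j:ℕ) < (i:ℕ) := hij
      omega
    exact mpow_zero_entry hM _ i _ this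
  have hgdiag : ∀ i : Fin m, g i i ≠ 0 := by
    intro i
    apply mpow_diag_entry hM hMsup
    simp
    have := i.isLt
    omega
  have hgdet : IsUnit g.det := by
    rw [Matrix.det_of_upperTriangular hgtri]
    rw [isUnit_iff_ne_zero]
    exact Finset.prod_ne_zero_iff.mpr (fun i _ => hgdiag i)
  obtain ⟨gu, hgu⟩ : IsUnit g := (Matrix.isUnit_iff_isUnit_det g).mpr hgdet
  have key : g * jordanBlock lam m = B * g := by
    rw [jordanBlock_eq, hBM, mul_add, add_mul, mul_smul_comm, smul_mul_assoc, mul_one, one_mul]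
    congr 1
    ext i j
    rw [mul_shift]
    have hMg : (M * g) i j = (M ^ ((m - 1 - (j:ℕ)) + 1)) i ⟨m-1, hlast⟩ := by
      rw [pow_succ', mul_apply, mul_apply]
      rfl
    rw [hMg]
    by_cases hj : 0 < (j:ℕ)
    · rw [dif_pos hj]
      have : m - 1 - ((j:ℕ) - 1) = (m - 1 - (j:ℕ)) + 1 := by
        have := j.isLt; omega
      show (M ^ (m - 1 - ((j:ℕ)-1))) i ⟨m-1, hlast⟩ = _
      rw [this]
    · rw [dif_neg hj]
      have hj0 : (j:ℕ) = 0 := by omega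
      rw [hj0]
      refine (mpow_zero_entry hM _ _ _ ?_).symm
      simp
      omega
  refine ⟨gu, ?_⟩
  have hginv : gu.val * (gu⁻¹).val = 1 := gu.mul_inv
  calc gu.val * jordanBlock lam m * (gu⁻¹).val = (g * jordanBlock lam m) * (gu⁻¹).val := by
        rw [hgu]
    _ = B * (gu.val * (gu⁻¹).val) := by rw [key, hgu, mul_assoc]
    _ = B := by rw [hginv, mul_one]

theorem sim_jinv {m : ℕ} {μ : ℂ} (hμ : μ ≠ 0) :
    ∃ g : (Matrix (Fin m) (Fin m) ℂ)ˣ,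
      g.val * jordanBlock μ⁻¹ m * (g⁻¹).val = jinv μ m := by
  apply sim_upper
  · intro i j h
    rw [jinv_apply, if_neg h]
  · intro i
    rw [jinv_apply, if_pos le_rfl, Nat.sub_self, pow_zero, mul_one]
  · intro i j h
    rw [jinv_apply, if_pos (by omega)]
    have : (j:ℕ) - (i:ℕ) = 1 := by omega
    rw [this, pow_one]
    simp [hμ]

end SimUpper


section Blocks

variable {k : ℕ} (m : Fin k → ℕ)

lemma sigma_sum {M : Type*} [AddCommMonoid M] (F : ((i : Fin k) × Fin (m i)) → M) :
    ∑ p : (i : Fin k) × Fin (m i), F p = ∑ i : Fin k, ∑ x : Fin (m i), F ⟨i, x⟩ := by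
  rw [← Finset.univ_sigma_univ, Finset.sum_sigma]

/-- Block diagonal of a family of units, as a unit. -/
noncomputable def blockUnit (u : ∀ i : Fin k, (Matrix (Fin (m i)) (Fin (m i)) ℂ)ˣ) :
    (Matrix ((i : Fin k) × Fin (m i)) ((i : Fin k) × Fin (m i)) ℂ)ˣ where
  val := blockDiagonal' (fun i => (u i).val)
  inv := blockDiagonal' (fun i => ((u i)⁻¹).val)
  val_inv := by
    rw [← blockDiagonal'_mul]
    have : (fun i => (u i).val * ((u i)⁻¹).val) = fun i => (1 : Matrix (Fin (m i)) (Fin (m i)) ℂ) := by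
      funext i
      exact (u i).mul_inv
    rw [this]
    exact blockDiagonal'_one
  inv_val := by
    rw [← blockDiagonal'_mul]
    have : (fun i => ((u i)⁻¹).val * (u i).val) = fun i => (1 : Matrix (Fin (m i)) (Fin (m i)) ℂ) := by
      funext i
      exact (u i).inv_mul
    rw [this]
    exact blockDiagonal'_one

@[simp] lemma blockUnit_val (u : ∀ i : Fin k, (Matrix (Fin (m i)) (Fin (m i)) ℂ)ˣ) :
    (blockUnit m u).val = blockDiagonal' (fun i => (u i).val) := rfl

@[simp] lemma blockUnit_inv (u : ∀ i : Fin k, (Matrix (Fin (m i)) (Fin (m i)) ℂ)ˣ) :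
    ((blockUnit m u)⁻¹).val = blockDiagonal' (fun i => ((u i)⁻¹).val) := rfl

/-- Block permutation matrix. -/
def permMat (σ : Equiv.Perm (Fin k)) :
    Matrix ((i : Fin k) × Fin (m i)) ((i : Fin k) × Fin (m i)) ℂ :=
  Matrix.of fun p q => if p.1 = σ q.1 ∧ (p.2 : ℕ) = (q.2 : ℕ) then 1 else 0

lemma permMat_mul_transpose (σ : Equiv.Perm (Fin k)) (hmσ : ∀ i, m (σ i) = m i) :
    permMat m σ * (permMat m σ)ᵀ = 1 := by
  ext ⟨i, x⟩ ⟨j, y⟩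
  rw [mul_apply, sigma_sum m (fun p => permMat m σ ⟨i,x⟩ p * (permMat m σ)ᵀ p ⟨j,y⟩)]
  rw [Finset.sum_eq_single (σ.symm i)]
  · simp only [transpose_apply, permMat, Matrix.of_apply]
    have hσ : σ (σ.symm i) = i := σ.apply_symm_apply i
    rcases eq_or_ne i j with rfl | hij
    · have : ∀ z : Fin (m (σ.symm i)),
          (if i = σ (σ.symm i) ∧ (x:ℕ) = (z:ℕ) then (1:ℂ) else 0) *
            (if i = σ (σ.symm i) ∧ (y:ℕ) = (z:ℕ) then 1 else 0)
          = if (x:ℕ) = (z:ℕ) then (if (y:ℕ) = (z:ℕ) then 1 else 0) else 0 := by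
        intro z
        rcases eq_or_ne ((x:ℕ)) ((z:ℕ)) with h1 | h1 <;>
          rcases eq_or_ne ((y:ℕ)) ((z:ℕ)) with h2 | h2 <;>
          simp [h1, h2, hσ]
      rw [Finset.sum_congr rfl (fun z _ => this z), sum_fin_eq]
      have hx : (x:ℕ) < m (σ.symm i) := by
        have h := hmσ (σ.symm i)
        rw [hσ] at h
        have := x.isLt
        omega
      rw [dif_pos hx]
      rw [Matrix.one_apply]
      rcases eq_or_ne ((y:ℕ)) ((x:ℕ)) with h2 | h2
      · rw [if_pos h2, if_pos (congrArg (Sigma.mk i) (Fin.ext h2.symm))]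
      · rw [if_neg h2, if_neg (by intro hc; injection hc with _ hc2; exact h2 (congrArg Fin.val hc2).symm)]
    · have : ∀ z : Fin (m (σ.symm i)),
          (if i = σ (σ.symm i) ∧ (x:ℕ) = (z:ℕ) then (1:ℂ) else 0) *
            (if j = σ (σ.symm i) ∧ (y:ℕ) = (z:ℕ) then 1 else 0) = 0 := by
        intro z
        have : ¬ (j = σ (σ.symm i) ∧ (y:ℕ) = (z:ℕ)) := by
          rw [hσ]
          intro ⟨h1, _⟩
          exact hij h1.symm
        rw [if_neg this, mul_zero]
      rw [Finset.sum_congr rfl (fun z _ => this z), Finset.sum_const_zero]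
      rw [Matrix.one_apply, if_neg (by intro hc; injection hc with hc1 _; exact hij hc1)]
  · intro t _ ht
    apply Finset.sum_eq_zero
    intro z _
    have : ¬ (i = σ t ∧ (x:ℕ) = (z:ℕ)) := by
      intro ⟨h1, _⟩
      exact ht (by rw [h1, Equiv.symm_apply_apply])
    simp only [permMat, Matrix.of_apply, transpose_apply]
    rw [if_neg this, zero_mul]
  · intro hc
    exact absurd (Finset.mem_univ _) hc

/-- The block permutation matrix as a unit. -/
noncomputable def permUnit (σ : Equiv.Perm (Fin k)) (hmσ : ∀ i, m (σ i) = m i) :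
    (Matrix ((i : Fin k) × Fin (m i)) ((i : Fin k) × Fin (m i)) ℂ)ˣ :=
  ⟨permMat m σ, (permMat m σ)ᵀ, permMat_mul_transpose m σ hmσ,
    mul_eq_one_comm.mp (permMat_mul_transpose m σ hmσ)⟩

lemma permMat_conj (σ : Equiv.Perm (Fin k)) (hmσ : ∀ i, m (σ i) = m i)
    (lam lam' : Fin k → ℂ) (hl : ∀ j, lam' (σ j) = lam j) :
    permMat m σ * blockDiagonal' (fun i => jordanBlock (lam i) (m i)) =
      blockDiagonal' (fun i => jordanBlock (lam' i) (m i)) * permMat m σ := by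
  ext ⟨i, x⟩ ⟨j, y⟩
  rw [mul_apply, mul_apply,
    sigma_sum m (fun p => permMat m σ ⟨i,x⟩ p *
      blockDiagonal' (fun i => jordanBlock (lam i) (m i)) p ⟨j,y⟩),
    sigma_sum m (fun p => blockDiagonal' (fun i => jordanBlock (lam' i) (m i)) ⟨i,x⟩ p *
      permMat m σ p ⟨j,y⟩)]
  rw [Finset.sum_eq_single j (fun t _ ht => Finset.sum_eq_zero (fun z _ => by
      rw [blockDiagonal'_apply, dif_neg ht, mul_zero]))
    (fun hc => absurd (Finset.mem_univ _) hc)]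
  rw [Finset.sum_eq_single i (fun t _ ht => Finset.sum_eq_zero (fun z _ => by
      rw [blockDiagonal'_apply, dif_neg (fun hc => ht hc.symm), zero_mul]))
    (fun hc => absurd (Finset.mem_univ _) hc)]
  by_cases hij : i = σ j
  · subst hij
    have hmm : m j = m (σ j) := (hmσ j).symm
    have h1 : ∀ z : Fin (m j),
        permMat m σ ⟨σ j, x⟩ ⟨j, z⟩ *
          blockDiagonal' (fun i => jordanBlock (lam i) (m i)) ⟨j, z⟩ ⟨j, y⟩
        = if (x:ℕ) = (z:ℕ) then
            (if (z:ℕ) = (y:ℕ) then lam j else if (z:ℕ)+1 = (y:ℕ) then 1 else 0) else 0 := by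
      intro z
      rw [blockDiagonal'_apply, dif_pos rfl]
      simp only [permMat, Matrix.of_apply, true_and, cast_eq]
      rw [jordanBlock_apply]
      split <;> simp
    rw [Finset.sum_congr rfl (fun z _ => h1 z), sum_fin_eq]
    have hx : (x:ℕ) < m j := by
      have := x.isLt
      omega
    rw [dif_pos hx]
    have h2 : ∀ z : Fin (m (σ j)),
        blockDiagonal' (fun i => jordanBlock (lam' i) (m i)) ⟨σ j, x⟩ ⟨σ j, z⟩ *
          permMat m σ ⟨σ j, z⟩ ⟨j, y⟩
        = if (y:ℕ) = (z:ℕ) then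
            (if (x:ℕ) = (z:ℕ) then lam' (σ j) else if (x:ℕ)+1 = (z:ℕ) then 1 else 0) else 0 := by
      intro z
      rw [blockDiagonal'_apply, dif_pos rfl]
      simp only [permMat, Matrix.of_apply, true_and, cast_eq]
      rw [jordanBlock_apply]
      by_cases h : (z:ℕ) = (y:ℕ)
      · rw [if_pos h, mul_one, if_pos h.symm]
      · rw [if_neg h, mul_zero, if_neg (fun hc => h hc.symm)]
    rw [Finset.sum_congr rfl (fun z _ => h2 z), sum_fin_eq]
    have hy : (y:ℕ) < m (σ j) := by
      have := y.isLt
      omega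
    rw [dif_pos hy, hl j]
  · have hz1 : ∀ z : Fin (m j),
        permMat m σ ⟨i, x⟩ ⟨j, z⟩ *
          blockDiagonal' (fun i => jordanBlock (lam i) (m i)) ⟨j, z⟩ ⟨j, y⟩ = 0 := by
      intro z
      simp only [permMat, Matrix.of_apply]
      rw [if_neg (fun hc => hij hc.1), zero_mul]
    have hz2 : ∀ z : Fin (m i),
        blockDiagonal' (fun i => jordanBlock (lam' i) (m i)) ⟨i, x⟩ ⟨i, z⟩ *
          permMat m σ ⟨i, z⟩ ⟨j, y⟩ = 0 := by
      intro z
      simp only [permMat, Matrix.of_apply]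
      rw [if_neg (fun hc => hij hc.1), mul_zero]
    rw [Finset.sum_congr rfl (fun z _ => hz1 z), Finset.sum_congr rfl (fun z _ => hz2 z),
      Finset.sum_const_zero, Finset.sum_const_zero]

end Blocks


section Rev

theorem reversible_of_symm {k : ℕ} (lam : Fin k → ℂ) (m : Fin k → ℕ)
    (hlam : ∀ i, lam i ≠ 0) (σ : Equiv.Perm (Fin k))
    (hmσ : ∀ i, m (σ i) = m i) (hlσ : ∀ i, lam (σ i) = (lam i)⁻¹) :
    Reversible (blockDiagonal' fun i : Fin k => jordanBlock (lam i) (m i)) := by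
  classical
  set A := blockDiagonal' fun i : Fin k => jordanBlock (lam i) (m i) with hA
  set C := blockDiagonal' fun i : Fin k => jordanBlock ((lam i)⁻¹) (m i) with hC
  set a : (Matrix ((i : Fin k) × Fin (m i)) ((i : Fin k) × Fin (m i)) ℂ)ˣ :=
    blockUnit m (fun i => jUnit (lam i) (m i) (hlam i)) with ha
  have haval : a.val = A := rfl
  have hainv : (a⁻¹).val = blockDiagonal' fun i : Fin k => jinv (lam i) (m i) := rfl
  choose u hu using fun i : Fin k => sim_jinv (m := m i) (hlam i)
  set U := blockUnit m u with hU
  have hUconj : U.val * C * (U⁻¹).val = blockDiagonal' fun i : Fin k => jinv (lam i) (m i) := by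
    rw [hU, blockUnit_val, blockUnit_inv, hC, ← blockDiagonal'_mul, ← blockDiagonal'_mul]
    exact congrArg _ (funext fun i => hu i)
  set P := permUnit m σ hmσ with hP
  have hPconj : P.val * A * (P⁻¹).val = C := by
    have h1 : P.val * A = C * P.val := by
      rw [hP, hA, hC]
      exact permMat_conj m σ hmσ lam (fun i => (lam i)⁻¹)
        (fun j => by show (lam (σ j))⁻¹ = lam j; rw [hlσ j, inv_inv])
    calc P.val * A * (P⁻¹).val = C * (P.val * (P⁻¹).val) := by rw [h1, mul_assoc]
      _ = C := by rw [← Units.val_mul, mul_inv_cancel, Units.val_one, mul_one]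
  refine ⟨a, haval, U * P, ?_⟩
  ext : 1
  rw [Units.val_mul, Units.val_mul, hainv]
  have hinv : ((U * P)⁻¹).val = (P⁻¹).val * (U⁻¹).val := by
    rw [_root_.mul_inv_rev, Units.val_mul]
  rw [hinv, haval]
  calc U.val * P.val * A * ((P⁻¹).val * (U⁻¹).val)
      = U.val * (P.val * A * (P⁻¹).val) * (U⁻¹).val := by simp only [mul_assoc]
    _ = blockDiagonal' fun i : Fin k => jinv (lam i) (m i) := by rw [hPconj, hUconj]

end Rev


section Rank

open Module

variable {k : ℕ} {n' : Fin k → ℕ}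

lemma blockDiagonal'_mulVec (M : ∀ i, Matrix (Fin (n' i)) (Fin (n' i)) ℂ)
    (v : ((i : Fin k) × Fin (n' i)) → ℂ) (i : Fin k) (x : Fin (n' i)) :
    (blockDiagonal' M).mulVec v ⟨i, x⟩ = (M i).mulVec (fun y => v ⟨i, y⟩) x := by
  rw [Matrix.mulVec, dotProduct,
    sigma_sum n' (fun p => blockDiagonal' M ⟨i, x⟩ p * v p)]
  rw [Finset.sum_eq_single i]
  · rw [Matrix.mulVec, dotProduct]
    apply Finset.sum_congr rfl
    intro z _
    rw [blockDiagonal'_apply, dif_pos rfl, cast_eq]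
  · intro t _ ht
    apply Finset.sum_eq_zero
    intro z _
    rw [blockDiagonal'_apply, dif_neg (fun hc => ht hc.symm), zero_mul]
  · intro hc
    exact absurd (Finset.mem_univ _) hc

/-- Linear equivalence between a pi-submodule and the product of submodules. -/
def piSubEquiv {ι : Type*} {φ : ι → Type*} [∀ i, AddCommMonoid (φ i)] [∀ i, Module ℂ (φ i)]
    (p : ∀ i, Submodule ℂ (φ i)) :
    (Submodule.pi Set.univ p) ≃ₗ[ℂ] Π i, p i where
  toFun x i := ⟨x.1 i, x.2 i (Set.mem_univ i)⟩
  map_add' _ _ := rfl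
  map_smul' _ _ := rfl
  invFun y := ⟨fun i => (y i).1, fun i _ => (y i).2⟩
  left_inv _ := rfl
  right_inv _ := rfl

lemma finrank_pi_submodule {ι : Type*} [Fintype ι] {φ : ι → Type*}
    [∀ i, AddCommGroup (φ i)] [∀ i, Module ℂ (φ i)]
    [∀ i, FiniteDimensional ℂ (φ i)] (p : ∀ i, Submodule ℂ (φ i)) :
    finrank ℂ (Submodule.pi Set.univ p) = ∑ i, finrank ℂ (p i) := by
  rw [(piSubEquiv p).finrank_eq]
  exact Module.finrank_pi_fintype ℂ

lemma rank_blockDiagonal' (M : ∀ i, Matrix (Fin (n' i)) (Fin (n' i)) ℂ) :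
    (blockDiagonal' M).rank = ∑ i, (M i).rank := by
  classical
  set Φ : (((p : (i : Fin k) × Fin (n' i)) → ℂ)) ≃ₗ[ℂ] (∀ i, Fin (n' i) → ℂ) :=
    LinearEquiv.piCurry ℂ (fun (i : Fin k) (_ : Fin (n' i)) => ℂ) with hΦ
  have hrange : LinearMap.range (blockDiagonal' M).mulVecLin =
      Submodule.comap (Φ : ((p : (i : Fin k) × Fin (n' i)) → ℂ) →ₗ[ℂ] ∀ i, Fin (n' i) → ℂ)
        (Submodule.pi Set.univ fun i => LinearMap.range (M i).mulVecLin) := by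
    ext w
    simp only [LinearMap.mem_range, Submodule.mem_comap, Submodule.mem_pi, Set.mem_univ,
      forall_true_left, Matrix.mulVecLin_apply]
    constructor
    · rintro ⟨v, rfl⟩ i
      refine ⟨fun y => v ⟨i, y⟩, ?_⟩
      funext x
      rw [← blockDiagonal'_mulVec M v i x]
      rfl
    · intro h
      choose v hv using h
      refine ⟨fun p => v p.1 p.2, ?_⟩
      funext ⟨i, x⟩
      rw [blockDiagonal'_mulVec]
      have := congrFun (hv i) x
      exact this
  rw [Matrix.rank, hrange]
  rw [Submodule.comap_equiv_eq_map_symm]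
  rw [LinearEquiv.finrank_map_eq]
  rw [finrank_pi_submodule]
  rfl

end Rank


section BlockRank

variable {m : ℕ}

lemma jordanBlock_triangular (lam : ℂ) : (jordanBlock lam m).BlockTriangular id := by
  intro i j hij
  have hij' : (j:ℕ) < (i:ℕ) := hij
  rw [jordanBlock_apply, if_neg (by omega), if_neg (by omega)]

lemma det_jordanBlock (lam : ℂ) : (jordanBlock lam m).det = lam ^ m := by
  rw [Matrix.det_of_upperTriangular (jordanBlock_triangular lam)]
  have : ∀ i : Fin m, jordanBlock lam m i i = lam := by
    intro i
    rw [jordanBlock_apply, if_pos rfl]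
  rw [Finset.prod_congr rfl (fun i _ => this i), Finset.prod_const, Finset.card_univ,
    Fintype.card_fin]

lemma jordanBlock_sub_smul (lam μ : ℂ) :
    jordanBlock lam m - μ • (1 : Matrix (Fin m) (Fin m) ℂ) = jordanBlock (lam - μ) m := by
  ext i j
  simp only [Matrix.sub_apply, Matrix.smul_apply, Matrix.one_apply, jordanBlock_apply,
    smul_eq_mul]
  rcases eq_or_ne i j with rfl | hij
  · simp
  · have hij' : (i:ℕ) ≠ (j:ℕ) := fun hc => hij (Fin.ext hc)
    rw [if_neg hij', if_neg hij', if_neg hij, mul_zero, sub_zero]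

lemma rank_jordan_pow_ne {lam μ : ℂ} (h : lam ≠ μ) (r : ℕ) :
    (((jordanBlock lam m - μ • 1) : Matrix (Fin m) (Fin m) ℂ) ^ r).rank = m := by
  rw [jordanBlock_sub_smul]
  have hdet : IsUnit ((jordanBlock (lam - μ) m ^ r).det) := by
    rw [Matrix.det_pow, det_jordanBlock, isUnit_iff_ne_zero]
    exact pow_ne_zero _ (pow_ne_zero _ (sub_ne_zero_of_ne h))
  rw [Matrix.rank_of_isUnit _ ((Matrix.isUnit_iff_isUnit_det _).mpr hdet), Fintype.card_fin]

/-- The `r`-th power of the nilpotent Jordan block. -/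
def Emat (m r : ℕ) : Matrix (Fin m) (Fin m) ℂ :=
  Matrix.of fun i j => if (i:ℕ) + r = (j:ℕ) then 1 else 0

lemma Emat_zero : Emat m 0 = 1 := by
  ext i j
  simp [Emat, Matrix.one_apply, Fin.ext_iff]

lemma jordan_zero_pow (r : ℕ) : (jordanBlock (0:ℂ) m) ^ r = Emat m r := by
  induction r with
  | zero => rw [pow_zero, Emat_zero]
  | succ r ih =>
    rw [pow_succ, ih]
    ext i j
    rw [mul_shift]
    show _ = if (i:ℕ) + (r+1) = (j:ℕ) then 1 else 0
    by_cases hj : 0 < (j:ℕ)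
    · rw [dif_pos hj]
      show (if (i:ℕ) + r = (j:ℕ) - 1 then (1:ℂ) else 0) = _
      rcases eq_or_ne ((i:ℕ) + r) ((j:ℕ) - 1) with h | h
      · rw [if_pos h, if_pos (by omega)]
      · rw [if_neg h, if_neg (by omega)]
    · rw [dif_neg hj, if_neg (by omega)]

lemma Emat_t_mul (r : ℕ) :
    (Emat m r)ᵀ * Emat m r =
      Matrix.diagonal (fun j : Fin m => if r ≤ (j:ℕ) then (1:ℂ) else 0) := by
  ext j j'
  rw [mul_apply]
  have : ∀ t : Fin m, (Emat m r)ᵀ j t * Emat m r t j'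
      = if (j:ℕ) - r = (t:ℕ) then
          (if r ≤ (j:ℕ) ∧ (j:ℕ) = (j':ℕ) then (1:ℂ) else 0) else 0 := by
    intro t
    show (if (t:ℕ) + r = (j:ℕ) then (1:ℂ) else 0) * (if (t:ℕ) + r = (j':ℕ) then 1 else 0) = _
    rcases eq_or_ne ((t:ℕ) + r) ((j:ℕ)) with h1 | h1 <;>
      rcases eq_or_ne ((t:ℕ) + r) ((j':ℕ)) with h2 | h2
    · rw [if_pos h1, if_pos h2, one_mul, if_pos (by omega), if_pos (by omega)]
    · rw [if_pos h1, if_neg h2, mul_zero]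
      by_cases h3 : (j:ℕ) - r = (t:ℕ)
      · rw [if_pos h3, if_neg (by omega)]
      · rw [if_neg h3]
    · rw [if_neg h1, zero_mul]
      by_cases h3 : (j:ℕ) - r = (t:ℕ)
      · rw [if_pos h3, if_neg (by omega)]
      · rw [if_neg h3]
    · rw [if_neg h1, zero_mul]
      by_cases h3 : (j:ℕ) - r = (t:ℕ)
      · rw [if_pos h3, if_neg (by omega)]
      · rw [if_neg h3]
  rw [Finset.sum_congr rfl (fun t _ => this t), sum_fin_eq, dif_pos (by have := j.isLt; omega)]
  rw [Matrix.diagonal_apply]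
  rcases eq_or_ne j j' with rfl | hjj
  · simp
  · have : (j:ℕ) ≠ (j':ℕ) := fun hc => hjj (Fin.ext hc)
    rw [if_neg (by omega), if_neg hjj]

lemma Emat_absorb (r : ℕ) : Emat m r * ((Emat m r)ᵀ * Emat m r) = Emat m r := by
  rw [Emat_t_mul]
  ext i j
  rw [Matrix.mul_diagonal]
  show (if (i:ℕ) + r = (j:ℕ) then (1:ℂ) else 0) * (if r ≤ (j:ℕ) then 1 else 0)
    = if (i:ℕ) + r = (j:ℕ) then 1 else 0
  rcases eq_or_ne ((i:ℕ) + r) ((j:ℕ)) with h | h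
  · rw [if_pos h, if_pos (by omega), one_mul]
  · rw [if_neg h, zero_mul]

lemma card_subtype_le (m r : ℕ) : Fintype.card {j : Fin m // r ≤ (j:ℕ)} = m - r := by
  have e : {j : Fin m // r ≤ (j:ℕ)} ≃ Fin (m - r) := {
    toFun := fun j => ⟨(j.1:ℕ) - r, by have := j.1.isLt; have := j.2; omega⟩
    invFun := fun x => ⟨⟨(x:ℕ) + r, by have := x.isLt; omega⟩, by simp⟩
    left_inv := fun j => Subtype.ext (Fin.ext (by have := j.2; simp; omega))
    right_inv := fun x => Fin.ext (by simp) }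
  rw [Fintype.card_congr e, Fintype.card_fin]

lemma rank_Emat (r : ℕ) : (Emat m r).rank = m - r := by
  classical
  have h1 : (Emat m r).rank ≤ ((Emat m r)ᵀ * Emat m r).rank := by
    conv_lhs => rw [← Emat_absorb (m := m) r]
    exact Matrix.rank_mul_le_right _ _
  have h2 : ((Emat m r)ᵀ * Emat m r).rank ≤ (Emat m r).rank :=
    Matrix.rank_mul_le_right _ _
  have h3 : ((Emat m r)ᵀ * Emat m r).rank = m - r := by
    rw [Emat_t_mul, Matrix.rank_diagonal]
    rw [← card_subtype_le m r]
    apply Fintype.card_congr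
    apply Equiv.subtypeEquivRight
    intro j
    by_cases h : r ≤ (j:ℕ) <;> simp [h]
  omega

lemma rank_jordan_pow_eq (lam : ℂ) (r : ℕ) :
    (((jordanBlock lam m - lam • 1) : Matrix (Fin m) (Fin m) ℂ) ^ r).rank = m - r := by
  rw [jordanBlock_sub_smul, sub_self, jordan_zero_pow, rank_Emat]

end BlockRank


section Invariance

variable {k : ℕ}

lemma rank_A_pow (lam : Fin k → ℂ) (m : Fin k → ℕ) (μ : ℂ) (r : ℕ) :
    (((blockDiagonal' fun i : Fin k => jordanBlock (lam i) (m i)) - μ • 1) ^ r).rank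
      + ∑ i : Fin k, (if lam i = μ then min r (m i) else 0) = ∑ i : Fin k, m i := by
  classical
  have h1 : blockDiagonal' (fun i : Fin k => jordanBlock (lam i) (m i) - μ • 1)
      = ((blockDiagonal' fun i : Fin k => jordanBlock (lam i) (m i)) - μ • 1) := by
    calc blockDiagonal' (fun i : Fin k => jordanBlock (lam i) (m i) - μ • 1)
        = blockDiagonal' ((fun i : Fin k => jordanBlock (lam i) (m i))
            - (fun i : Fin k => μ • (1 : Matrix (Fin (m i)) (Fin (m i)) ℂ))) := rfl
      _ = blockDiagonal' (fun i : Fin k => jordanBlock (lam i) (m i))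
            - blockDiagonal' (fun i : Fin k => μ • (1 : Matrix (Fin (m i)) (Fin (m i)) ℂ)) :=
          blockDiagonal'_sub _ _
      _ = (blockDiagonal' fun i : Fin k => jordanBlock (lam i) (m i)) - μ • 1 := by
          rw [show (fun i : Fin k => μ • (1 : Matrix (Fin (m i)) (Fin (m i)) ℂ))
              = μ • (fun i : Fin k => (1 : Matrix (Fin (m i)) (Fin (m i)) ℂ)) from rfl,
            blockDiagonal'_smul, show blockDiagonal' (fun i : Fin k => (1 : Matrix (Fin (m i)) (Fin (m i)) ℂ)) = 1 from blockDiagonal'_one]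
  rw [← h1]
  have h2 : (blockDiagonal' (fun i : Fin k => jordanBlock (lam i) (m i) - μ • 1)) ^ r
      = blockDiagonal' (fun i : Fin k => (jordanBlock (lam i) (m i) - μ • 1) ^ r) := by
    rw [← blockDiagonal'_pow]
    rfl
  rw [h2, rank_blockDiagonal', ← Finset.sum_add_distrib]
  apply Finset.sum_congr rfl
  intro i _
  by_cases h : lam i = μ
  · rw [if_pos h, h, rank_jordan_pow_eq]
    omega
  · rw [if_neg h, rank_jordan_pow_ne h, add_zero]

variable {ι : Type*} [Fintype ι] [DecidableEq ι]

lemma conj_pow (g : (Matrix ι ι ℂ)ˣ) (X : Matrix ι ι ℂ) (r : ℕ) :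
    (g.val * X * (g⁻¹).val) ^ r = g.val * X ^ r * (g⁻¹).val := by
  induction r with
  | zero => rw [pow_zero, pow_zero, mul_one, g.mul_inv]
  | succ r ih =>
    rw [pow_succ, pow_succ, ih]
    calc g.val * X ^ r * (g⁻¹).val * (g.val * X * (g⁻¹).val)
        = g.val * X ^ r * ((g⁻¹).val * g.val) * (X * (g⁻¹).val) := by
          simp only [mul_assoc]
      _ = g.val * (X ^ r * X) * (g⁻¹).val := by
          rw [g.inv_mul, mul_one]
          simp only [mul_assoc]

lemma rank_conj (g : (Matrix ι ι ℂ)ˣ) (X : Matrix ι ι ℂ) :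
    (g.val * X * (g⁻¹).val).rank = X.rank := by
  have hg : IsUnit (g.val.det) := (Matrix.isUnit_iff_isUnit_det _).mp g.isUnit
  have hg' : IsUnit ((g⁻¹).val.det) := (Matrix.isUnit_iff_isUnit_det _).mp (g⁻¹).isUnit
  rw [Matrix.rank_mul_eq_left_of_isUnit_det _ _ hg', Matrix.rank_mul_eq_right_of_isUnit_det _ _ hg]

lemma rank_inv_shift {a : (Matrix ι ι ℂ)ˣ} {μ : ℂ} (hμ : μ ≠ 0) (r : ℕ) :
    (((a⁻¹).val - μ • 1) ^ r).rank = ((a.val - μ⁻¹ • 1) ^ r).rank := by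
  have key : ((-μ) • (a⁻¹).val) * (a.val - μ⁻¹ • 1) = (a⁻¹).val - μ • 1 := by
    rw [smul_mul_assoc, mul_sub, a.inv_mul, mul_smul_comm, mul_one, smul_sub, smul_smul]
    have hc : (-μ) * μ⁻¹ = -1 := by field_simp
    rw [hc]
    simp only [neg_smul, one_smul]
    abel
  have hcomm : Commute ((-μ) • (a⁻¹).val) (a.val - μ⁻¹ • 1) := by
    apply Commute.smul_left
    apply Commute.sub_right
    · show (a⁻¹).val * a.val = a.val * (a⁻¹).val
      rw [a.inv_mul, a.mul_inv]
    · exact Commute.smul_right (Commute.one_right _) _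
  rw [← key, hcomm.mul_pow, smul_pow]
  have hunit : IsUnit ((((-μ) ^ r • ((a⁻¹).val) ^ r)).det) := by
    rw [Matrix.det_smul, isUnit_iff_ne_zero]
    apply mul_ne_zero
    · exact pow_ne_zero _ (pow_ne_zero _ (neg_ne_zero.mpr hμ))
    · rw [← Units.val_pow_eq_pow_val]
      have := (Matrix.isUnit_iff_isUnit_det _).mp (a⁻¹ ^ r).isUnit
      exact (isUnit_iff_ne_zero).mp this
  rw [Matrix.rank_mul_eq_right_of_isUnit_det _ _ hunit]

/-- If `A` is conjugate to its inverse then the rank data is symmetric under `μ ↦ μ⁻¹`. -/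
lemma sum_min_symm (lam : Fin k → ℂ) (m : Fin k → ℕ)
    (a : (Matrix ((i : Fin k) × Fin (m i)) ((i : Fin k) × Fin (m i)) ℂ)ˣ)
    (haval : a.val = blockDiagonal' fun i : Fin k => jordanBlock (lam i) (m i))
    (g : (Matrix ((i : Fin k) × Fin (m i)) ((i : Fin k) × Fin (m i)) ℂ)ˣ)
    (hg : g * a * g⁻¹ = a⁻¹) {μ : ℂ} (hμ : μ ≠ 0) (r : ℕ) :
    ∑ i : Fin k, (if lam i = μ then min r (m i) else 0)
      = ∑ i : Fin k, (if lam i = μ⁻¹ then min r (m i) else 0) := by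
  have hainv : (a⁻¹).val = g.val * a.val * (g⁻¹).val := by
    rw [← hg]
    rw [Units.val_mul, Units.val_mul]
  have hshift : (a⁻¹).val - μ⁻¹ • 1 = g.val * (a.val - μ⁻¹ • 1) * (g⁻¹).val := by
    rw [mul_sub, sub_mul, ← hainv]
    congr 1
    rw [mul_smul_comm, smul_mul_assoc, mul_one, g.mul_inv]
  have e1 : ((a.val - μ • 1) ^ r).rank = ((a.val - μ⁻¹ • 1) ^ r).rank := by
    have h1 : ((a⁻¹).val - μ⁻¹ • 1) ^ r = g.val * (a.val - μ⁻¹ • 1) ^ r * (g⁻¹).val := by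
      rw [hshift, conj_pow]
    have h2 : (((a⁻¹).val - μ⁻¹ • 1) ^ r).rank = ((a.val - μ⁻¹ • 1) ^ r).rank := by
      rw [h1, rank_conj]
    have h3 : (((a⁻¹).val - μ⁻¹ • 1) ^ r).rank = ((a.val - (μ⁻¹)⁻¹ • 1) ^ r).rank :=
      rank_inv_shift (inv_ne_zero hμ) r
    rw [inv_inv] at h3
    rw [← h3, h2]
  have hA := rank_A_pow lam m μ r
  have hB := rank_A_pow lam m μ⁻¹ r
  rw [← haval] at hA hB
  omega

end Invariance


section Count

variable {k : ℕ}

lemma count_map_univ (u : Fin k → ℂ × ℕ) (b : ℂ × ℕ) :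
    Multiset.count b (Multiset.map u (Finset.univ : Finset (Fin k)).val)
      = ∑ i : Fin k, if b = u i then 1 else 0 := by
  classical
  rw [Multiset.count_map]
  have h1 : Multiset.filter (fun a => b = u a) (Finset.univ : Finset (Fin k)).val
      = (Finset.filter (fun a => b = u a) Finset.univ).val := by
    rw [Finset.filter_val]
  rw [h1]
  show (Finset.filter (fun a => b = u a) Finset.univ).card = _
  rw [Finset.card_filter]

lemma card_fiber (u : Fin k → ℂ × ℕ) (b : ℂ × ℕ) :
    Fintype.card {a : Fin k // u a = b}
      = Multiset.count b (Multiset.map u (Finset.univ : Finset (Fin k)).val) := by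
  classical
  rw [count_map_univ, Fintype.card_subtype, Finset.card_filter]
  apply Finset.sum_congr rfl
  intro i _
  by_cases h : u i = b
  · rw [if_pos h, if_pos h.symm]
  · rw [if_neg h, if_neg (fun hc => h hc.symm)]

/-- Extract a permutation matching two tuples with equal associated multisets. -/
lemma exists_perm_of_multiset_eq (u v : Fin k → ℂ × ℕ)
    (h : Multiset.map u (Finset.univ : Finset (Fin k)).val
        = Multiset.map v (Finset.univ : Finset (Fin k)).val) :
    ∃ σ : Equiv.Perm (Fin k), ∀ i, v (σ i) = u i := by
  have e : ∀ c : ℂ × ℕ, {a : Fin k // u a = c} ≃ {a : Fin k // v a = c} := by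
    intro c
    apply Fintype.equivOfCardEq
    rw [card_fiber u, card_fiber v, h]
  exact ⟨Equiv.ofFiberEquiv e, fun i => Equiv.ofFiberEquiv_map e i⟩

end Count

section Main

variable {k : ℕ}

theorem stmt16_aux (lam : Fin k → ℂ) (m : Fin k → ℕ)
    (hlam : ∀ i, lam i ≠ 0) (hm : ∀ i, 1 ≤ m i) :
    Reversible (blockDiagonal' fun i : Fin k => jordanBlock (lam i) (m i)) ↔
    ((Finset.univ : Finset (Fin k)).val.map fun i => (lam i, m i)).map
        (fun p => (p.1⁻¹, p.2)) =
      ((Finset.univ : Finset (Fin k)).val.map fun i => (lam i, m i)) := by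
  classical
  rw [Multiset.map_map]
  constructor
  · rintro ⟨a, haval, g, hg⟩
    have hS : ∀ {μ : ℂ}, μ ≠ 0 → ∀ r : ℕ,
        (∑ i : Fin k, if lam i = μ then min r (m i) else 0)
          = ∑ i : Fin k, if lam i = μ⁻¹ then min r (m i) else 0 :=
      fun {μ} hμ r => sum_min_symm lam m a haval g hg hμ r
    -- the key count identity
    have hkey : ∀ (μ : ℂ) (s : ℕ), 1 ≤ s →
        (∑ i : Fin k, if (μ, s) = (lam i, m i) then 1 else 0)
          + (∑ i : Fin k, if lam i = μ then min (s+1) (m i) else 0)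
          + (∑ i : Fin k, if lam i = μ then min (s-1) (m i) else 0)
        = 2 * ∑ i : Fin k, (if lam i = μ then min s (m i) else 0) := by
      intro μ s hs
      rw [← Finset.sum_add_distrib, ← Finset.sum_add_distrib, Finset.mul_sum]
      apply Finset.sum_congr rfl
      intro i _
      by_cases h : lam i = μ
      · subst h
        rw [if_pos rfl, if_pos rfl, if_pos rfl]
        by_cases hsm : s = m i
        · rw [if_pos (by rw [hsm])]
          omega
        · rw [if_neg (fun hc => hsm (congrArg Prod.snd hc))]
          omega
      · rw [if_neg (fun hc : (μ, s) = (lam i, m i) => h (congrArg Prod.fst hc).symm),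
          if_neg h, if_neg h, if_neg h]
        ring
    apply Multiset.ext.mpr
    intro b
    obtain ⟨μ, s⟩ := b
    rw [count_map_univ, count_map_univ]
    rcases Nat.eq_zero_or_pos s with rfl | hs
    · have hL : (∑ i : Fin k, if ((μ:ℂ), (0:ℕ))
          = (((fun p : ℂ × ℕ => (p.1⁻¹, p.2)) ∘ fun i => (lam i, m i)) i) then 1 else 0) = 0 :=
        Finset.sum_eq_zero (fun i _ => by
          rw [if_neg]
          intro hc
          have h2 : (0:ℕ) = m i := congrArg Prod.snd hc
          have := hm i
          omega)
      have hR : (∑ i : Fin k, if ((μ:ℂ), (0:ℕ)) = (lam i, m i) then 1 else 0) = 0 :=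
        Finset.sum_eq_zero (fun i _ => by
          rw [if_neg]
          intro hc
          have h2 : (0:ℕ) = m i := congrArg Prod.snd hc
          have := hm i
          omega)
      rw [hL, hR]
    rcases eq_or_ne μ 0 with rfl | hμ
    · have hL : (∑ i : Fin k, if ((0:ℂ), s)
          = (((fun p : ℂ × ℕ => (p.1⁻¹, p.2)) ∘ fun i => (lam i, m i)) i) then 1 else 0) = 0 :=
        Finset.sum_eq_zero (fun i _ => by
          rw [if_neg]
          intro hc
          have h2 : (0:ℂ) = (lam i)⁻¹ := congrArg Prod.fst hc
          exact hlam i (inv_eq_zero.mp h2.symm))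
      have hR : (∑ i : Fin k, if ((0:ℂ), s) = (lam i, m i) then 1 else 0) = 0 :=
        Finset.sum_eq_zero (fun i _ => by
          rw [if_neg]
          intro hc
          have h2 : (0:ℂ) = lam i := congrArg Prod.fst hc
          exact hlam i h2.symm)
      rw [hL, hR]
    · -- main case
      have hstep : (∑ i : Fin k, if (μ, s) = (((fun p : ℂ × ℕ => (p.1⁻¹, p.2)) ∘ fun i => (lam i, m i)) i) then 1 else 0)
          = ∑ i : Fin k, if (μ⁻¹, s) = (lam i, m i) then 1 else 0 := by
        apply Finset.sum_congr rfl
        intro i _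
        apply if_congr _ rfl rfl
        show ((μ, s) = ((lam i)⁻¹, m i)) ↔ _
        rw [Prod.mk.injEq, Prod.mk.injEq]
        constructor
        · rintro ⟨h1, h2⟩
          exact ⟨by rw [h1, inv_inv], h2⟩
        · rintro ⟨h1, h2⟩
          exact ⟨by rw [← h1, inv_inv], h2⟩
      rw [hstep]
      have h1 := hkey μ s hs
      have h2 := hkey μ⁻¹ s hs
      have e1 := hS hμ (s+1)
      have e2 := hS hμ (s-1)
      have e3 := hS hμ s
      omega
  · intro h
    obtain ⟨σ, hσ⟩ := exists_perm_of_multiset_eq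
      ((fun p : ℂ × ℕ => (p.1⁻¹, p.2)) ∘ fun i => (lam i, m i)) (fun i => (lam i, m i)) h
    have hmσ : ∀ i, m (σ i) = m i := fun i => congrArg Prod.snd (hσ i)
    have hlσ : ∀ i, lam (σ i) = (lam i)⁻¹ := fun i => congrArg Prod.fst (hσ i)
    exact reversible_of_symm lam m hlam σ hmσ hlσ

end Main

end Stmt16Aux

/-- An invertible complex matrix in Jordan canonical form
`J(λ₁,m₁) ⊕ ⋯ ⊕ J(λ_k,m_k)` (with `λᵢ ∈ ℂ \ {0}`) is conjugate to its inverse in `GL(n,ℂ)`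
if and only if the multiset of pairs `(λᵢ,mᵢ)` is invariant under the map `(λ,m) ↦ (λ⁻¹,m)`. -/
theorem stmt16 (k : ℕ) (lam : Fin k → ℂ) (m : Fin k → ℕ)
    (hlam : ∀ i, lam i ≠ 0) (hm : ∀ i, 1 ≤ m i) :
    Reversible (blockDiagonal' fun i : Fin k => jordanBlock (lam i) (m i)) ↔
    ((Finset.univ : Finset (Fin k)).val.map fun i => (lam i, m i)).map
        (fun p => (p.1⁻¹, p.2)) =
      ((Finset.univ : Finset (Fin k)).val.map fun i => (lam i, m i)) :=
  Stmt16Aux.stmt16_aux lam m hlam hm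
end
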